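/- arXiv:0706.2958 — 9 statements merged into one kernel-verified Lean document; each statement's English description precedes it below -/
import Mathlib

section
/- The restriction to K⁺ of the orthogonal projection p_x onto the hyperplane orthogonal to x is a homeomorphism of K⁺ onto the interior (taken in that hyperplane) of the projection p_x(K); in particular K⁺ is homeomorphic to ℝ^{n-1}. -/
open Set Metric Pointwise

/-- The shadow boundary of `K` in direction `x`: boundary points `P` such that the line
`{P + t • x}` meets `K` but not the interior of `K`. -/
def shadowBoundary {n : ℕ} (K : Set (EuclideanSpace ℝ (Fin n)))
    (x : EuclideanSpace ℝ (Fin n)) : Set (EuclideanSpace ℝ (Fin n)) :=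
  {P | P ∈ frontier K ∧ (∃ t : ℝ, P + t • x ∈ K) ∧ ∀ t : ℝ, P + t • x ∉ interior K}

/-- The positive part `K⁺` of the boundary. -/
def posPart {n : ℕ} (K : Set (EuclideanSpace ℝ (Fin n)))
    (x : EuclideanSpace ℝ (Fin n)) : Set (EuclideanSpace ℝ (Fin n)) :=
  {y | y ∈ frontier K ∧ ∃ τ : ℝ, 0 < τ ∧ y - τ • x ∈ interior K}

/-- The negative part `K⁻` of the boundary. -/
def negPart {n : ℕ} (K : Set (EuclideanSpace ℝ (Fin n)))
    (x : EuclideanSpace ℝ (Fin n)) : Set (EuclideanSpace ℝ (Fin n)) :=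
  {y | y ∈ frontier K ∧ ∃ τ : ℝ, 0 < τ ∧ y + τ • x ∈ interior K}
section AuxLemmas
variable {F : Type*} [NormedAddCommGroup F] [NormedSpace ℝ F]

lemma aux_interior_closure {U : Set F} (hUconv : Convex ℝ U) (hUopen : IsOpen U)
    (hne : U.Nonempty) : interior (closure U) ⊆ U := by
  intro w hw'
  obtain ⟨u, hu⟩ := hne
  by_cases hwu : w = u
  · rwa [hwu]
  obtain ⟨ε, hε, hball⟩ := Metric.isOpen_iff.mp isOpen_interior _ hw'
  set δ : ℝ := ε / (2 * ‖w - u‖) with hδdef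
  have hwu' : ‖w - u‖ ≠ 0 := by simpa [sub_eq_zero] using hwu
  have hwupos : 0 < ‖w - u‖ := lt_of_le_of_ne (norm_nonneg _) (Ne.symm hwu')
  have hδpos : 0 < δ := by positivity
  have hw'' : w + δ • (w - u) ∈ closure U := by
    apply interior_subset
    apply hball
    rw [mem_ball, dist_eq_norm]
    have h4 : w + δ • (w - u) - w = δ • (w - u) := by module
    rw [h4, norm_smul, Real.norm_eq_abs, abs_of_pos hδpos]
    have key : δ * ‖w - u‖ = ε / 2 := by rw [hδdef]; field_simp
    rw [key]; linarith
  have hcombo := hUconv.combo_interior_closure_mem_interior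
    (x := u) (y := w + δ • (w - u)) (a := δ / (1 + δ)) (b := 1 / (1 + δ))
    (by rwa [hUopen.interior_eq]) hw''
    (by positivity) (by positivity) (by field_simp; ring)
  have heq : (δ / (1 + δ)) • u + (1 / (1 + δ)) • (w + δ • (w - u)) = w := by
    have h1δ : (1 : ℝ) + δ ≠ 0 := by positivity
    match_scalars <;> field_simp <;> ring
  rw [heq, hUopen.interior_eq] at hcombo
  exact hcombo

lemma aux_subset_closure_interior {K : Set F} (hconv : Convex ℝ K)
    (hint : (interior K).Nonempty) : K ⊆ closure (interior K) := by
  intro y hy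
  obtain ⟨z, hz⟩ := hint
  have hcont : Continuous fun t : ℝ => t • z + (1 - t) • y := by fun_prop
  have htend : Filter.Tendsto (fun t : ℝ => t • z + (1 - t) • y)
      (nhdsWithin 0 (Ioi 0)) (nhds y) :=
    (hcont.tendsto' 0 y (by simp)).mono_left (nhdsWithin_le_nhds (s := Ioi (0:ℝ)))
  refine mem_closure_of_tendsto htend ?_
  filter_upwards [Ioo_mem_nhdsGT_of_mem (by constructor <;> norm_num : (0:ℝ) ∈ Ico 0 1)] with t ht
  exact hconv.combo_interior_closure_mem_interior hz (subset_closure hy) ht.1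
    (by linarith [ht.2]) (by ring)


end AuxLemmas

open RealInnerProductSpace in
set_option maxHeartbeats 2000000 in
theorem posPart_homeomorph_interior_projection {n : ℕ}
    (K : Set (EuclideanSpace ℝ (Fin n))) (x : EuclideanSpace ℝ (Fin n))
    (hK : IsCompact K) (hconv : Convex ℝ K) (hint : (interior K).Nonempty)
    (hx : ‖x‖ = 1) :
    (∃ h : ↥(_root_.posPart K x) ≃ₜ
        ↥(interior ((Submodule.orthogonalProjectionOnto ((ℝ ∙ x)ᗮ)) '' K)),
      ∀ y : ↥(_root_.posPart K x),
        (h y : ↥((ℝ ∙ x)ᗮ)) =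
          Submodule.orthogonalProjectionOnto ((ℝ ∙ x)ᗮ) (y : EuclideanSpace ℝ (Fin n))) ∧
    Nonempty (↥(_root_.posPart K x) ≃ₜ EuclideanSpace ℝ (Fin (n - 1))) := by
  have hx0 : x ≠ 0 := by
    intro h; rw [h, norm_zero] at hx; norm_num at hx
  set V : Submodule ℝ (EuclideanSpace ℝ (Fin n)) := (ℝ ∙ x)ᗮ with hVdef
  set p := Submodule.orthogonalProjectionOnto V with hpdef
  set S : Set V := p '' K with hSdef
  -- basic facts about the projection
  have hpx : p x = 0 :=
    Submodule.orthogonalProjectionOnto_orthogonal_apply_eq_zero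
      (Submodule.mem_span_singleton_self x)
  have hdecomp : ∀ y : EuclideanSpace ℝ (Fin n), (p y : EuclideanSpace ℝ (Fin n)) = y - ⟪x, y⟫ • x := by
    intro y
    have hmem : y - ⟪x, y⟫ • x ∈ V := by
      rw [hVdef, Submodule.mem_orthogonal_singleton_iff_inner_right,
        inner_sub_right, real_inner_smul_right, real_inner_self_eq_norm_sq, hx]
      ring
    have h1 : y = (y - ⟪x, y⟫ • x) + ⟪x, y⟫ • x := by abel
    nth_rewrite 1 [h1]
    rw [map_add, map_smul, hpx, smul_zero, add_zero]
    exact congrArg Subtype.val (Submodule.orthogonalProjectionOnto_mem_subspace_eq_self (⟨_, hmem⟩ : V))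
  have hpt : ∀ (y : EuclideanSpace ℝ (Fin n)) (t : ℝ), p (y + t • x) = p y := by
    intro y t
    rw [map_add, map_smul, hpx, smul_zero, add_zero]
  have hpV : ∀ v : V, p (v : EuclideanSpace ℝ (Fin n)) = v := fun v =>
    Submodule.orthogonalProjectionOnto_mem_subspace_eq_self v
  have hxV : ∀ v : V, ⟪x, (v : EuclideanSpace ℝ (Fin n))⟫ = 0 := by
    intro v
    exact Submodule.mem_orthogonal_singleton_iff_inner_right.mp v.2
  -- the fiber sets and the "top" function τ
  set A : V → Set ℝ := fun v => {t : ℝ | (v : EuclideanSpace ℝ (Fin n)) + t • x ∈ K} with hAdef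
  obtain ⟨R, hR⟩ := hK.isBounded.subset_closedBall 0
  have hAbdd : ∀ v, BddAbove (A v) := by
    intro v
    refine ⟨R, fun t ht => ?_⟩
    have h1 : ⟪x, (v : EuclideanSpace ℝ (Fin n)) + t • x⟫ = t := by
      rw [inner_add_right, hxV, real_inner_smul_right, real_inner_self_eq_norm_sq, hx]
      ring
    have h2 := real_inner_le_norm x ((v : EuclideanSpace ℝ (Fin n)) + t • x)
    have h3 : ‖(v : EuclideanSpace ℝ (Fin n)) + t • x‖ ≤ R := by
      simpa [dist_eq_norm] using hR ht
    rw [h1, hx, one_mul] at h2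
    exact h2.trans h3
  have hAclosed : ∀ v, IsClosed (A v) := by
    intro v
    exact hK.isClosed.preimage (by fun_prop)
  set τ : V → ℝ := fun v => sSup (A v) with hτdef
  have hAne : ∀ v ∈ S, (A v).Nonempty := by
    rintro v ⟨z, hz, rfl⟩
    exact ⟨⟪x, z⟫, by simp only [hAdef, mem_setOf_eq, hdecomp z, sub_add_cancel, hz]⟩
  have hτmem : ∀ v ∈ S, (v : EuclideanSpace ℝ (Fin n)) + τ v • x ∈ K := by
    intro v hv
    exact (hAclosed v).csSup_mem (hAne v hv) (hAbdd v)
  -- a point strictly below the top, inside the interior, pushes τ up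
  have hup : ∀ (v : V) (s : ℝ), (v : EuclideanSpace ℝ (Fin n)) + s • x ∈ interior K → s < τ v := by
    intro v s hs
    obtain ⟨ε, hε, hball⟩ := Metric.isOpen_iff.mp isOpen_interior _ hs
    have hmem : s + ε / 2 ∈ A v := by
      have : (v : EuclideanSpace ℝ (Fin n)) + (s + ε / 2) • x ∈ ball ((v : EuclideanSpace ℝ (Fin n)) + s • x) ε := by
        rw [mem_ball, dist_eq_norm]
        have : (v : EuclideanSpace ℝ (Fin n)) + (s + ε / 2) • x - ((v : EuclideanSpace ℝ (Fin n)) + s • x) = (ε / 2) • x := by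
          module
        rw [this, norm_smul, hx]
        simp [abs_of_pos hε]
        linarith
      simp only [hAdef, mem_setOf_eq]
      exact interior_subset (hball this)
    have := le_csSup (hAbdd v) hmem
    have hε2 : (0:ℝ) < ε / 2 := by linarith
    calc s < s + ε / 2 := by linarith
    _ ≤ τ v := this
  -- frontier of K
  have hfrK : frontier K = K \ interior K := hK.isClosed.frontier_eq
  -- K ⊆ closure (interior K)
  have hKsub : K ⊆ closure (interior K) := aux_subset_closure_interior hconv hint
  -- openness of the projection of the interior
  have hpsurj : Function.Surjective p := fun v => ⟨v, hpV v⟩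
  set U : Set V := p '' interior K with hUdef
  have hUopen : IsOpen U :=
    ContinuousLinearMap.isOpenMap p hpsurj _ isOpen_interior
  have hUconv : Convex ℝ U := by
    have := (hconv.interior).linear_image (p : EuclideanSpace ℝ (Fin n) →ₗ[ℝ] V)
    simpa using this
  have hSconv : Convex ℝ S := by
    have := hconv.linear_image (p : EuclideanSpace ℝ (Fin n) →ₗ[ℝ] V)
    simpa using this
  -- interior S = U
  have hintS : interior S = U := by
    apply Subset.antisymm
    · intro w hw
      have hSclos : S ⊆ closure U := by
        calc S ⊆ p '' closure (interior K) := image_mono hKsub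
        _ ⊆ closure U := image_closure_subset_closure_image p.continuous
      exact aux_interior_closure hUconv hUopen (hint.image _) (interior_mono hSclos hw)
    · exact hUopen.subset_interior_iff.mpr (image_mono interior_subset)
  -- forward map lands in interior S
  have hfwd : ∀ y ∈ _root_.posPart K x, (p y : V) ∈ interior S := by
    rintro y ⟨hyfr, τ', hτ'pos, hyint⟩
    rw [hintS]
    have : p y = p (y - τ' • x) := by
      have h1 : y = (y - τ' • x) + τ' • x := by abel
      nth_rewrite 1 [h1]
      rw [hpt]
    rw [this]
    exact mem_image_of_mem _ hyint
  -- inverse map lands in posPart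
  have hbwd : ∀ v : V, v ∈ interior S →
      ((v : EuclideanSpace ℝ (Fin n)) + τ v • x ∈ _root_.posPart K x) := by
    intro v hv
    have hvS : v ∈ S := interior_subset hv
    have hvU : v ∈ U := by rwa [hintS] at hv
    obtain ⟨z, hzint, hzv⟩ := hvU
    have hzeq : (v : EuclideanSpace ℝ (Fin n)) + ⟪x, z⟫ • x = z := by
      rw [← hzv, hdecomp z]; abel
    have hslt : ⟪x, z⟫ < τ v := hup v _ (by rwa [hzeq])
    have htop : (v : EuclideanSpace ℝ (Fin n)) + τ v • x ∈ K := hτmem v hvS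
    have hnotint : (v : EuclideanSpace ℝ (Fin n)) + τ v • x ∉ interior K := by
      intro hcon
      exact lt_irrefl (τ v) (hup v _ hcon)
    refine ⟨by rw [hfrK]; exact ⟨htop, hnotint⟩, τ v - ⟪x, z⟫, by linarith, ?_⟩
    have : (v : EuclideanSpace ℝ (Fin n)) + τ v • x - (τ v - ⟪x, z⟫) • x
        = (v : EuclideanSpace ℝ (Fin n)) + ⟪x, z⟫ • x := by module
    rw [this, hzeq]
    exact hzint
  -- left inverse identity
  have hleft : ∀ y ∈ _root_.posPart K x,
      ((p y : EuclideanSpace ℝ (Fin n)) + τ (p y) • x) = y := by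
    rintro y hyP
    obtain ⟨hyfr, τ', hτ'pos, hyint⟩ := hyP
    have hyK : y ∈ K := by
      rw [hfrK] at hyfr; exact hyfr.1
    have hynotint : y ∉ interior K := by
      rw [hfrK] at hyfr; exact hyfr.2
    have hpyS : (p y : V) ∈ S := mem_image_of_mem _ hyK
    have hyeq : (p y : EuclideanSpace ℝ (Fin n)) + ⟪x, y⟫ • x = y := by
      rw [hdecomp y]; abel
    have hsA : ⟪x, y⟫ ∈ A (p y) := by
      simp only [hAdef, mem_setOf_eq, hyeq]; exact hyK
    have hsle : ⟪x, y⟫ ≤ τ (p y) := le_csSup (hAbdd _) hsA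
    have hτle : τ (p y) ≤ ⟪x, y⟫ := by
      by_contra hlt
      push_neg at hlt
      set s := ⟪x, y⟫
      set t := τ (p y)
      have hq : (p y : EuclideanSpace ℝ (Fin n)) + t • x ∈ K := hτmem _ hpyS
      have hqy : (p y : EuclideanSpace ℝ (Fin n)) + t • x = y + (t - s) • x := by
        rw [hdecomp y]; module
      set D : ℝ := (t - s) + τ' with hDdef
      have hDpos : 0 < D := by simp only [hDdef]; linarith
      have hcombo := hconv.combo_interior_closure_mem_interior
        (x := y - τ' • x) (y := y + (t - s) • x)
        (a := (t - s) / D) (b := τ' / D)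
        hyint (subset_closure (hqy ▸ hq))
        (div_pos (by linarith) hDpos) (le_of_lt (div_pos hτ'pos hDpos))
        (by rw [← add_div, ← hDdef]; exact div_self (ne_of_gt hDpos))
      have heq : ((t - s) / D) • (y - τ' • x) + (τ' / D) • (y + (t - s) • x) = y := by
        have hD0 : D ≠ 0 := ne_of_gt hDpos
        match_scalars <;> (field_simp; try ring)
      rw [heq] at hcombo
      exact hynotint hcombo
    have hτeq : τ (p y) = ⟪x, y⟫ := le_antisymm hτle hsle
    rw [hτeq, hyeq]
  -- right inverse identity
  have hright : ∀ v : V, p ((v : EuclideanSpace ℝ (Fin n)) + τ v • x) = v := by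
    intro v
    rw [hpt, hpV]
  -- concavity and continuity of τ
  have hτconc : ConcaveOn ℝ S τ := by
    refine ⟨hSconv, ?_⟩
    intro v hv w hw a b ha hb hab
    have hA : a * τ v + b * τ w ∈ A (a • v + b • w) := by
      have h1 : ((a • v + b • w : V) : EuclideanSpace ℝ (Fin n)) + (a * τ v + b * τ w) • x
          = a • ((v : EuclideanSpace ℝ (Fin n)) + τ v • x) + b • ((w : EuclideanSpace ℝ (Fin n)) + τ w • x) := by
        push_cast
        module
      simp only [hAdef, mem_setOf_eq, h1]
      exact hconv (hτmem v hv) (hτmem w hw) ha hb hab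
    exact le_csSup (hAbdd _) hA
  have hτcont : ContinuousOn τ (interior S) := hτconc.continuousOn_interior
  -- build the homeomorphism
  set fwd : ↥(_root_.posPart K x) → ↥(interior S) := fun y => ⟨p y, hfwd y y.2⟩ with hfwddef
  set bwd : ↥(interior S) → ↥(_root_.posPart K x) :=
    fun v => ⟨((v : V) : EuclideanSpace ℝ (Fin n)) + τ (v : V) • x, hbwd v v.2⟩ with hbwddef
  have hfwdcont : Continuous fwd :=
    (p.continuous.comp continuous_subtype_val).subtype_mk _
  have hbwdcont : Continuous bwd := by
    apply Continuous.subtype_mk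
    apply Continuous.add
    · exact continuous_subtype_val.comp continuous_subtype_val
    · exact (hτcont.restrict.smul continuous_const)
  let e : ↥(_root_.posPart K x) ≃ₜ ↥(interior S) :=
    { toFun := fwd
      invFun := bwd
      left_inv := fun y => Subtype.ext (hleft y y.2)
      right_inv := fun v => Subtype.ext (hright v)
      continuous_toFun := hfwdcont
      continuous_invFun := hbwdcont }
  constructor
  · exact ⟨e, fun y => rfl⟩
  -- second part
  have hSne : (interior S).Nonempty := by
    rw [hintS]
    exact hint.image _
  have hSbdd : Bornology.IsVonNBounded ℝ (interior S) := by
    apply (NormedSpace.isVonNBounded_iff ℝ).mpr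
    exact ((hK.image p.continuous).isBounded).subset interior_subset
  obtain ⟨e2, he2, -, -⟩ := exists_homeomorph_image_eq
    (s := interior S) (t := ball (0 : V) 1)
    hSconv.interior (by rwa [interior_interior]) hSbdd
    (convex_ball 0 1) (by rw [isOpen_ball.interior_eq]; exact ⟨0, by simp⟩)
    ((NormedSpace.isVonNBounded_iff ℝ).mpr isBounded_ball)
  rw [interior_interior, isOpen_ball.interior_eq] at he2
  have e3 : ↥(interior S) ≃ₜ ↥(ball (0 : V) 1) :=
    (e2.image (interior S)).trans (Homeomorph.setCongr he2)
  have e4 : ↥(ball (0 : V) 1) ≃ₜ V := Homeomorph.unitBall.symm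
  have hfinV : Module.finrank ℝ V = n - 1 := by
    have h1 : Module.finrank ℝ (ℝ ∙ x) = 1 := finrank_span_singleton hx0
    have h2 := Submodule.finrank_add_finrank_orthogonal (K := (ℝ ∙ x))
    rw [h1, finrank_euclideanSpace_fin, ← hVdef] at h2
    omega
  have e5 : V ≃ₜ EuclideanSpace ℝ (Fin (n - 1)) :=
    (ContinuousLinearEquiv.ofFinrankEq
      (by rw [hfinV, finrank_euclideanSpace_fin])).toHomeomorph
  exact ⟨e.trans (e3.trans (e4.trans e5))⟩
end

section
/- Under the orthogonal projection p_x onto x^⊥, the image of the shadow boundary S(K,x) is exactly the relative boundary of the convex body p_x(K) in the hyperplane x^⊥, and the image of K⁺ (and of K⁻) is the relative interior of p_x(K). -/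
open Set Metric Pointwise
open Filter Topology

/-- If `s` is an open convex nonempty set and `t ⊆ closure s`, then `interior t ⊆ s`. -/
lemma interior_subset_of_subset_closure {E : Type*} [NormedAddCommGroup E] [NormedSpace ℝ E]
    {s t : Set E} (hs : Convex ℝ s) (hso : IsOpen s) (hne : s.Nonempty)
    (hts : t ⊆ closure s) : interior t ⊆ s := by
  intro q hq
  obtain ⟨q₀, hq₀⟩ := hne
  obtain ⟨r, hr, hball⟩ := Metric.mem_nhds_iff.mp (mem_interior_iff_mem_nhds.mp hq)
  set δ : ℝ := r / (2 * (‖q - q₀‖ + 1)) with hδdef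
  have hd : (0:ℝ) < ‖q - q₀‖ + 1 := by positivity
  have hδ : 0 < δ := by positivity
  have hq' : q + δ • (q - q₀) ∈ closure s := by
    apply hts; apply hball
    rw [mem_ball_iff_norm]
    have : ‖q + δ • (q - q₀) - q‖ = δ * ‖q - q₀‖ := by
      rw [add_sub_cancel_left, norm_smul, Real.norm_eq_abs, abs_of_pos hδ]
    rw [this, hδdef]
    calc r / (2 * (‖q - q₀‖ + 1)) * ‖q - q₀‖
        < r / (2 * (‖q - q₀‖ + 1)) * (‖q - q₀‖ + 1) := by
          apply mul_lt_mul_of_pos_left (by linarith) (by positivity)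
      _ = r / 2 := by field_simp
      _ < r := by linarith
  have hτ : δ / (1 + δ) ∈ Ioc (0:ℝ) 1 := by
    constructor
    · positivity
    · rw [div_le_one (by linarith)]; linarith
  have key := hs.add_smul_sub_mem_interior' hq' (hso.interior_eq ▸ hq₀) hτ
  have heq : q + δ • (q - q₀) + (δ / (1 + δ)) • (q₀ - (q + δ • (q - q₀))) = q := by
    have h1 : (1:ℝ) + δ ≠ 0 := by linarith
    match_scalars <;> field_simp <;> ring
  rw [heq] at key
  exact interior_subset key

/-- A convex set with nonempty interior is contained in the closure of its interior. -/
lemma subset_closure_interior_of_convex {E : Type*} [NormedAddCommGroup E] [NormedSpace ℝ E]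
    {K : Set E} (hconv : Convex ℝ K) (hint : (interior K).Nonempty) :
    K ⊆ closure (interior K) := by
  obtain ⟨z, hz⟩ := hint
  intro y hy
  have hmem : ∀ k : ℕ, y + ((k:ℝ) + 1)⁻¹ • (z - y) ∈ interior K := fun k =>
    hconv.add_smul_sub_mem_interior hy hz
      ⟨by positivity, by
        rw [inv_le_one₀ (by positivity)]
        have := Nat.cast_nonneg (α := ℝ) k; linarith⟩
  have hlim : Tendsto (fun k : ℕ => y + ((k:ℝ) + 1)⁻¹ • (z - y)) atTop (𝓝 y) := by
    have h0 : Tendsto (fun k : ℕ => ((k:ℝ) + 1)⁻¹) atTop (𝓝 0) := by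
      exact tendsto_one_div_add_atTop_nhds_zero_nat.congr (by intro k; rw [one_div])
    have := (h0.smul_const (z - y)).const_add y
    simpa using this
  exact mem_closure_of_tendsto hlim (Filter.Eventually.of_forall hmem)

/-- From an interior point, moving along a direction `v` hits the frontier at a positive time. -/
lemma exists_frontier_ray {E : Type*} [NormedAddCommGroup E] [NormedSpace ℝ E]
    {K : Set E} (hK : IsCompact K) {v : E} (hv : v ≠ 0) {z : E} (hz : z ∈ interior K) :
    ∃ T : ℝ, 0 < T ∧ z + T • v ∈ K ∧ z + T • v ∉ interior K := by
  set A : Set ℝ := {t : ℝ | z + t • v ∈ K} with hA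
  have hAne : A.Nonempty := ⟨0, show z + (0:ℝ) • v ∈ K by simpa using interior_subset hz⟩
  obtain ⟨C, hC⟩ := hK.isBounded.subset_ball 0
  have hBdd : ∀ t ∈ A, |t| ≤ (C + ‖z‖) / ‖v‖ := by
    intro t ht
    have h1 : ‖z + t • v‖ < C := by simpa [mem_ball_iff_norm] using hC ht
    have h2 : ‖t • v‖ ≤ ‖z + t • v‖ + ‖z‖ := by
      have := norm_add_le (z + t • v) (-z); simpa using this
    rw [norm_smul, Real.norm_eq_abs] at h2
    rw [le_div_iff₀ (norm_pos_iff.mpr hv)]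
    nlinarith [norm_nonneg z]
  have hAcl : IsClosed A := hK.isClosed.preimage (by continuity)
  have hAcomp : IsCompact A := by
    have : A ⊆ Icc (-((C + ‖z‖) / ‖v‖)) ((C + ‖z‖) / ‖v‖) := fun t ht => abs_le.mp (hBdd t ht)
    exact (isCompact_Icc).of_isClosed_subset hAcl this
  set T := sSup A with hT
  have hTA : T ∈ A := hAcomp.sSup_mem hAne
  obtain ⟨ε, hε, hball⟩ := Metric.mem_nhds_iff.mp (mem_interior_iff_mem_nhds.mp hz)
  have hvn : 0 < ‖v‖ := norm_pos_iff.mpr hv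
  have hsmall : ε / (2 * ‖v‖) ∈ A := by
    show z + (ε / (2 * ‖v‖)) • v ∈ K
    apply hball
    rw [mem_ball_iff_norm, add_sub_cancel_left, norm_smul, Real.norm_eq_abs,
      abs_of_pos (by positivity)]
    calc ε / (2 * ‖v‖) * ‖v‖ = ε / 2 := by field_simp
      _ < ε := by linarith
  have hTpos : 0 < T := lt_of_lt_of_le (by positivity) (le_csSup hAcomp.bddAbove hsmall)
  refine ⟨T, hTpos, hTA, fun hmem => ?_⟩
  obtain ⟨δ, hδ, hball'⟩ := Metric.mem_nhds_iff.mp (mem_interior_iff_mem_nhds.mp hmem)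
  have hmem' : T + δ / (2 * ‖v‖) ∈ A := by
    show z + (T + δ / (2 * ‖v‖)) • v ∈ K
    have : z + (T + δ / (2 * ‖v‖)) • v ∈ ball (z + T • v) δ := by
      rw [mem_ball_iff_norm]
      have : z + (T + δ / (2 * ‖v‖)) • v - (z + T • v) = (δ / (2 * ‖v‖)) • v := by
        module
      rw [this, norm_smul, Real.norm_eq_abs, abs_of_pos (by positivity)]
      calc δ / (2 * ‖v‖) * ‖v‖ = δ / 2 := by field_simp
        _ < δ := by linarith
    exact hball' this
  have h1 := le_csSup hAcomp.bddAbove hmem'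
  have h2 : 0 < δ / (2 * ‖v‖) := by positivity
  rw [← hT] at h1
  linarith

theorem projection_images {n : ℕ} (K : Set (EuclideanSpace ℝ (Fin n)))
    (x : EuclideanSpace ℝ (Fin n)) (hK : IsCompact K) (hconv : Convex ℝ K)
    (hint : (interior K).Nonempty) (hx : ‖x‖ = 1) :
    (Submodule.orthogonalProjection ((ℝ ∙ x)ᗮ)) '' shadowBoundary K x =
        frontier ((Submodule.orthogonalProjection ((ℝ ∙ x)ᗮ)) '' K) ∧
      (Submodule.orthogonalProjection ((ℝ ∙ x)ᗮ)) '' posPart K x =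
        interior ((Submodule.orthogonalProjection ((ℝ ∙ x)ᗮ)) '' K) ∧
      (Submodule.orthogonalProjection ((ℝ ∙ x)ᗮ)) '' negPart K x =
        interior ((Submodule.orthogonalProjection ((ℝ ∙ x)ᗮ)) '' K) := by
  classical
  set p := Submodule.orthogonalProjection ((ℝ ∙ x)ᗮ) with hp
  have hx0 : x ≠ 0 := by
    intro h; rw [h, norm_zero] at hx; norm_num at hx
  have hpx : p x = 0 :=
    Submodule.orthogonalProjectionOnto_apply_of_mem_orthogonal
      (Submodule.le_orthogonal_orthogonal _ (Submodule.mem_span_singleton_self x))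
  have hcomm : ∀ (y : EuclideanSpace ℝ (Fin n)) (t : ℝ), p (y + t • x) = p y := by
    intro y t
    rw [map_add, map_smul, hpx, smul_zero, add_zero]
  have hker : ∀ y z : EuclideanSpace ℝ (Fin n), p z = p y → ∃ t : ℝ, z = y + t • x := by
    intro y z h
    have h0 : p (z - y) = 0 := by rw [map_sub, h, sub_self]
    have h1 : z - y ∈ ((ℝ ∙ x)ᗮ)ᗮ := by
      have h2 := Submodule.sub_starProjection_mem_orthogonal (K := (ℝ ∙ x)ᗮ) (z - y)
      rw [Submodule.starProjection_apply] at h2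
      change z - y - ((p (z - y) : (ℝ ∙ x)ᗮ) : EuclideanSpace ℝ (Fin n)) ∈ _ at h2
      rw [h0] at h2
      simpa using h2
    rw [Submodule.orthogonal_orthogonal] at h1
    obtain ⟨t, ht⟩ := Submodule.mem_span_singleton.mp h1
    exact ⟨t, by rw [ht]; abel⟩
  have hsurj : Function.Surjective ⇑p := fun v =>
    ⟨v, Submodule.orthogonalProjectionOnto_mem_subspace_eq_self v⟩
  have hopen : IsOpenMap ⇑p := p.isOpenMap hsurj
  have hs_open : IsOpen (⇑p '' interior K) := hopen _ isOpen_interior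
  have hs_conv : Convex ℝ (⇑p '' interior K) := by
    have := (hconv.interior).linear_image (p : EuclideanSpace ℝ (Fin n) →ₗ[ℝ] ((ℝ ∙ x)ᗮ))
    simpa using this
  have hsne : (⇑p '' interior K).Nonempty := hint.image _
  have hts : ⇑p '' K ⊆ closure (⇑p '' interior K) :=
    (image_mono (subset_closure_interior_of_convex hconv hint)).trans
      (image_closure_subset_closure_image p.continuous)
  have hio : interior (⇑p '' K) = ⇑p '' interior K :=
    subset_antisymm (interior_subset_of_subset_closure hs_conv hs_open hsne hts)
      (interior_maximal (image_mono interior_subset) hs_open)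
  have htcl : IsClosed (⇑p '' K) := (hK.image p.continuous).isClosed
  have hfr : frontier (⇑p '' K) = ⇑p '' K \ ⇑p '' interior K := by
    rw [htcl.frontier_eq, hio]
  have hKfr : frontier K = K \ interior K := hK.isClosed.frontier_eq
  refine ⟨?_, ?_, ?_⟩
  · apply subset_antisymm
    · rintro _ ⟨P, ⟨hPf, ⟨t₀, ht₀⟩, hall⟩, rfl⟩
      rw [hfr]
      constructor
      · exact ⟨P + t₀ • x, ht₀, hcomm P t₀⟩
      · rintro ⟨z, hz, hpz⟩
        obtain ⟨t, rfl⟩ := hker P z hpz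
        exact hall t hz
    · intro q hq
      rw [hfr] at hq
      obtain ⟨⟨y, hy, rfl⟩, hns⟩ := hq
      refine ⟨y, ⟨?_, ⟨0, by simpa using hy⟩, ?_⟩, rfl⟩
      · rw [hKfr]
        exact ⟨hy, fun h => hns ⟨y, h, rfl⟩⟩
      · intro t ht
        exact hns ⟨y + t • x, ht, hcomm y t⟩
  · rw [hio]
    apply subset_antisymm
    · rintro _ ⟨y, ⟨hyf, τ, hτ, hmem⟩, rfl⟩
      refine ⟨y - τ • x, hmem, ?_⟩
      rw [show y - τ • x = y + (-τ) • x by module, hcomm]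
    · rintro _ ⟨z, hz, rfl⟩
      obtain ⟨T, hT, hTK, hTni⟩ := exists_frontier_ray hK hx0 hz
      refine ⟨z + T • x, ⟨?_, T, hT, by simpa using hz⟩, hcomm z T⟩
      rw [hKfr]
      exact ⟨hTK, hTni⟩
  · rw [hio]
    apply subset_antisymm
    · rintro _ ⟨y, ⟨hyf, τ, hτ, hmem⟩, rfl⟩
      refine ⟨y + τ • x, hmem, hcomm y τ⟩
    · rintro _ ⟨z, hz, rfl⟩
      obtain ⟨T, hT, hTK, hTni⟩ := exists_frontier_ray hK (neg_ne_zero.mpr hx0) hz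
      refine ⟨z + T • (-x), ⟨?_, T, hT, ?_⟩, ?_⟩
      · rw [hKfr]
        exact ⟨hTK, hTni⟩
      · rw [show z + T • (-x) + T • x = z by module]
        exact hz
      · rw [show z + T • (-x) = z + (-T) • x by module, hcomm]
end

section
/- For every point P of the shadow boundary S(K,x), the intersection of the line {P + λx : λ ∈ ℝ} with K is either a single point or a closed segment contained in S(K,x). -/
open Set Metric Pointwise

theorem line_inter_body_of_mem_shadowBoundary {n : ℕ}
    (K : Set (EuclideanSpace ℝ (Fin n))) (x : EuclideanSpace ℝ (Fin n))
    (hK : IsCompact K) (hconv : Convex ℝ K) (hint : (interior K).Nonempty)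
    (hx : ‖x‖ = 1) :
    ∀ P ∈ shadowBoundary K x,
      ({y | ∃ t : ℝ, y = P + t • x} ∩ K = {P}) ∨
      (∃ a b : EuclideanSpace ℝ (Fin n), a ≠ b ∧
        {y | ∃ t : ℝ, y = P + t • x} ∩ K = segment ℝ a b ∧
        segment ℝ a b ⊆ shadowBoundary K x) := by
  intro P hP
  obtain ⟨hPf, ⟨t0, ht0⟩, hPnotint⟩ := hP
  have hxne : x ≠ 0 := by
    intro h; rw [h, norm_zero] at hx; norm_num at hx
  have hKcl : IsClosed K := hK.isClosed
  have hPK : P ∈ K := hKcl.frontier_subset hPf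
  set f : ℝ → EuclideanSpace ℝ (Fin n) := fun t => P + t • x with hf
  have hfc : Continuous f := by fun_prop
  set S : Set ℝ := {t | P + t • x ∈ K} with hS
  have h0S : (0:ℝ) ∈ S := by simp [hS, hPK]
  have hScl : IsClosed S := hKcl.preimage hfc
  obtain ⟨R, hR⟩ := hK.isBounded.subset_closedBall 0
  have hSsub : S ⊆ Icc (-(R + ‖P‖)) (R + ‖P‖) := by
    intro t ht
    have h1 : ‖P + t • x‖ ≤ R := by
      simpa [mem_closedBall, dist_zero_right] using hR ht
    have h2 : ‖t • x‖ ≤ R + ‖P‖ := by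
      calc ‖t • x‖ = ‖(P + t • x) - P‖ := by rw [add_sub_cancel_left]
        _ ≤ ‖P + t • x‖ + ‖P‖ := norm_sub_le _ _
        _ ≤ R + ‖P‖ := by linarith
    have h3 : |t| ≤ R + ‖P‖ := by
      rwa [norm_smul, hx, Real.norm_eq_abs, mul_one] at h2
    exact abs_le.mp h3
  have hScomp : IsCompact S := isCompact_Icc.of_isClosed_subset hScl hSsub
  have keyid : ∀ c d s t : ℝ, c + d = 1 →
      c • (P + s • x) + d • (P + t • x) = P + (c * s + d * t) • x := by
    intro c d s t hcd
    rw [smul_add, smul_add]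
    rw [show c • P + c • (s • x) + (d • P + d • (t • x))
        = (c • P + d • P) + (c • (s • x) + d • (t • x)) by abel]
    rw [← add_smul, hcd, one_smul, smul_smul, smul_smul, ← add_smul]
  have hSconv : Convex ℝ S := by
    intro u hu v hv c d hc hd hcd
    show P + (c • u + d • v) • x ∈ K
    rw [smul_eq_mul, smul_eq_mul, ← keyid c d u v hcd]
    exact hconv hu hv hc hd hcd
  obtain ⟨a, ha⟩ := hScomp.exists_isLeast ⟨0, h0S⟩
  obtain ⟨b, hb⟩ := hScomp.exists_isGreatest ⟨0, h0S⟩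
  have hab : a ≤ b := le_trans (ha.2 h0S) (hb.2 h0S)
  have hSeq : S = Icc a b := by
    apply Subset.antisymm
    · intro t ht; exact ⟨ha.2 ht, hb.2 ht⟩
    · exact hSconv.ordConnected.out ha.1 hb.1
  have hLK : {y | ∃ t : ℝ, y = P + t • x} ∩ K = f '' S := by
    ext y
    constructor
    · rintro ⟨⟨t, rfl⟩, hyK⟩; exact ⟨t, hyK, rfl⟩
    · rintro ⟨t, htS, rfl⟩; exact ⟨⟨t, rfl⟩, htS⟩
  have himg : f '' Icc a b = segment ℝ (f a) (f b) := by
    ext y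
    constructor
    · rintro ⟨t, ht, rfl⟩
      rw [← segment_eq_Icc hab] at ht
      obtain ⟨c, d, hc, hd, hcd, hct⟩ := ht
      refine ⟨c, d, hc, hd, hcd, ?_⟩
      rw [keyid c d a b hcd]
      show P + (c * a + d * b) • x = P + t • x
      simp only [smul_eq_mul] at hct
      rw [hct]
    · rintro ⟨c, d, hc, hd, hcd, rfl⟩
      refine ⟨c * a + d * b, ?_, (keyid c d a b hcd).symm⟩
      rw [← segment_eq_Icc hab]
      exact ⟨c, d, hc, hd, hcd, by simp [smul_eq_mul]⟩
  have hshift : ∀ s t : ℝ, f s + t • x = P + (s + t) • x := by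
    intro s t
    show P + s • x + t • x = P + (s + t) • x
    rw [add_smul, add_assoc]
  by_cases habeq : a = b
  · left
    have ha0 : a = 0 := le_antisymm (ha.2 h0S) (by rw [habeq]; exact hb.2 h0S)
    have hb0 : b = 0 := habeq ▸ ha0
    rw [hLK, hSeq, ha0, hb0]
    simp [hf]
  · right
    have hablt : a < b := lt_of_le_of_ne hab habeq
    refine ⟨f a, f b, ?_, ?_, ?_⟩
    · intro h
      have : (a - b) • x = 0 := by
        have h' : P + a • x = P + b • x := h
        have := add_left_cancel h'
        rw [sub_smul, this, sub_self]
      rcases smul_eq_zero.mp this with h1 | h1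
      · exact habeq (by linarith [sub_eq_zero.mp h1])
      · exact hxne h1
    · rw [hLK, hSeq, himg]
    · intro y hy
      rw [← himg] at hy
      obtain ⟨s, hs, rfl⟩ := hy
      have hsS : s ∈ S := hSeq ▸ hs
      have hsK : f s ∈ K := hsS
      have hnotint : ∀ t : ℝ, f s + t • x ∉ interior K := by
        intro t
        rw [hshift s t]
        exact hPnotint (s + t)
      have hfsnot : f s ∉ interior K := by
        have := hnotint 0
        simpa using this
      refine ⟨?_, ⟨0, by simpa using hsK⟩, hnotint⟩
      rw [hKcl.frontier_eq]
      exact ⟨hsK, hfsnot⟩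
end

section
/- The boundary (frontier, relative to bd K) of the closure of K⁺ is a closed subset of the shadow boundary S(K,x), and its removal separates bd K: bd K minus bd(cl(K⁺)) is the disjoint union of the two nonempty sets bd K \ cl(K⁺) and int(cl(K⁺)), both open in bd K. -/
open Set Metric Pointwise

/-- The positive part `K⁺` of the boundary. -/
def boundaryPosPart {n : ℕ} (K : Set (EuclideanSpace ℝ (Fin n)))
    (x : EuclideanSpace ℝ (Fin n)) : Set (EuclideanSpace ℝ (Fin n)) :=
  {y | y ∈ frontier K ∧ ∃ τ : ℝ, 0 < τ ∧ y - τ • x ∈ interior K}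

theorem frontier_closure_posPart_separates {n : ℕ}
    (K : Set (EuclideanSpace ℝ (Fin n))) (x : EuclideanSpace ℝ (Fin n))
    (hK : IsCompact K) (hconv : Convex ℝ K) (hint : (interior K).Nonempty)
    (hsymm : ∀ y ∈ K, -y ∈ K) (hx : ‖x‖ = 1) :
    -- the sets `K⁺` and `S(K,x)`, viewed inside the topological space `bd K`
    ∀ Kp S : Set ↥(frontier K),
      Kp = {y | (y : EuclideanSpace ℝ (Fin n)) ∈ boundaryPosPart K x} →
      S = {y | (y : EuclideanSpace ℝ (Fin n)) ∈ shadowBoundary K x} →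
      IsClosed (frontier (closure Kp)) ∧
      frontier (closure Kp) ⊆ S ∧
      (univ : Set ↥(frontier K)) \ frontier (closure Kp) =
        ((univ : Set ↥(frontier K)) \ closure Kp) ∪ interior (closure Kp) ∧
      IsOpen ((univ : Set ↥(frontier K)) \ closure Kp) ∧
      IsOpen (interior (closure Kp)) ∧
      ((univ : Set ↥(frontier K)) \ closure Kp).Nonempty ∧
      (interior (closure Kp)).Nonempty ∧
      Disjoint ((univ : Set ↥(frontier K)) \ closure Kp) (interior (closure Kp)) := by
  intro Kp S hKp hS
  have hKp' : ∀ z : ↥(frontier K), z ∈ Kp ↔ (z : EuclideanSpace ℝ (Fin n)) ∈ boundaryPosPart K x := by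
    intro z
    rw [show ((z : EuclideanSpace ℝ (Fin n)) ∈ boundaryPosPart K x)
        ↔ (z : EuclideanSpace ℝ (Fin n)) ∈ {y | y ∈ boundaryPosPart K x} from Iff.rfl, ← hKp]
    exact (Subtype.coe_injective.mem_set_image).symm
  have hS' : ∀ z : ↥(frontier K), z ∈ S ↔ (z : EuclideanSpace ℝ (Fin n)) ∈ shadowBoundary K x := by
    intro z
    rw [show ((z : EuclideanSpace ℝ (Fin n)) ∈ shadowBoundary K x)
        ↔ (z : EuclideanSpace ℝ (Fin n)) ∈ {y | y ∈ shadowBoundary K x} from Iff.rfl, ← hS]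
    exact (Subtype.coe_injective.mem_set_image).symm
  have hKclosed : IsClosed K := hK.isClosed
  have hsymm' : ∀ y : EuclideanSpace ℝ (Fin n), y ∈ K ↔ -y ∈ K := by
    intro y
    exact ⟨hsymm y, fun h => by simpa using hsymm _ h⟩
  -- the interior is symmetric
  have hneg : ∀ y : EuclideanSpace ℝ (Fin n), y ∈ interior K → -y ∈ interior K := by
    intro y hy
    have hKpre : (Homeomorph.neg (EuclideanSpace ℝ (Fin n))) ⁻¹' K = K := by
      ext z
      simpa using (hsymm' z).symm
    have h := (Homeomorph.neg (EuclideanSpace ℝ (Fin n))).preimage_interior K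
    rw [hKpre] at h
    have : y ∈ (Homeomorph.neg (EuclideanSpace ℝ (Fin n))) ⁻¹' interior K := by
      rw [h]; exact hy
    simpa using this
  have hintsymm : ∀ y : EuclideanSpace ℝ (Fin n),
      y ∈ interior K ↔ -y ∈ interior K := by
    intro y
    exact ⟨hneg y, fun h => by simpa using hneg _ h⟩
  -- 0 is an interior point
  have h0 : (0 : EuclideanSpace ℝ (Fin n)) ∈ interior K := by
    obtain ⟨y, hy⟩ := hint
    have hny : -y ∈ interior K := hneg y hy
    have := hconv.interior hy hny (by norm_num : (0:ℝ) ≤ 1/2)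
      (by norm_num : (0:ℝ) ≤ 1/2) (by norm_num)
    simpa using this
  -- the frontier is symmetric
  have hfr' : ∀ z : EuclideanSpace ℝ (Fin n),
      z ∈ frontier K ↔ z ∈ K ∧ z ∉ interior K := by
    intro z
    rw [hKclosed.frontier_eq]
    exact Iff.rfl
  have hfrsymm : ∀ y : EuclideanSpace ℝ (Fin n),
      y ∈ frontier K ↔ -y ∈ frontier K := by
    intro y
    rw [hfr' y, hfr' (-y), ← hsymm' y, ← hintsymm y]
  -- construct a boundary point in posPart
  obtain ⟨ε, hε, hball⟩ := Metric.isOpen_iff.1 isOpen_interior 0 h0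
  obtain ⟨R, hR⟩ := hK.isBounded.subset_closedBall 0
  set A : Set ℝ := {t : ℝ | 0 ≤ t ∧ t • x ∈ K} with hA
  have hAne : A.Nonempty := ⟨0, le_refl 0, by simpa using interior_subset h0⟩
  have hAbdd : BddAbove A := by
    refine ⟨R, fun t ht => ?_⟩
    have := hR ht.2
    rw [Metric.mem_closedBall, dist_zero_right, norm_smul, hx, mul_one] at this
    exact le_trans (le_abs_self t) this
  have hAclosed : IsClosed A := by
    have : A = Set.Ici (0:ℝ) ∩ (fun t : ℝ => t • x) ⁻¹' K := rfl
    rw [this]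
    exact isClosed_Ici.inter (hKclosed.preimage (continuous_id.smul continuous_const))
  set t₀ : ℝ := sSup A with ht₀
  have ht₀A : t₀ ∈ A := hAclosed.csSup_mem hAne hAbdd
  have ht₀pos : 0 < t₀ := by
    have hmem : ε/2 ∈ A := by
      refine ⟨by positivity, interior_subset (hball ?_)⟩
      rw [Metric.mem_ball, dist_zero_right, norm_smul, hx, mul_one, Real.norm_eq_abs,
        abs_of_pos (by positivity)]
      linarith
    have := le_csSup hAbdd hmem
    linarith
  set y₀ : EuclideanSpace ℝ (Fin n) := t₀ • x with hy₀
  have hy₀K : y₀ ∈ K := ht₀A.2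
  have hy₀fr : y₀ ∈ frontier K := by
    rw [hfr' y₀]
    refine ⟨hy₀K, fun hy₀int => ?_⟩
    obtain ⟨δ, hδ, hballδ⟩ := Metric.isOpen_iff.1 isOpen_interior y₀ hy₀int
    have hmem : t₀ + δ/2 ∈ A := by
      refine ⟨by linarith [ht₀pos.le], interior_subset (hballδ ?_)⟩
      rw [Metric.mem_ball, hy₀, dist_eq_norm, ← sub_smul,
        show t₀ + δ/2 - t₀ = δ/2 by ring, norm_smul, hx, mul_one, Real.norm_eq_abs,
        abs_of_pos (by positivity)]
      linarith
    have := le_csSup hAbdd hmem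
    linarith
  -- y₀ ∈ posPart
  have hy₀pos : y₀ ∈ boundaryPosPart K x := by
    refine ⟨hy₀fr, t₀/2, by positivity, ?_⟩
    have hcm := hconv.combo_interior_self_mem_interior h0 hy₀K
      (by norm_num : (0:ℝ) < 1/2) (by norm_num : (0:ℝ) ≤ 1/2) (by norm_num)
    have heq : y₀ - (t₀/2) • x = (1/2 : ℝ) • (0 : EuclideanSpace ℝ (Fin n)) + (1/2 : ℝ) • y₀ := by
      rw [smul_zero, zero_add, hy₀, smul_smul, ← sub_smul]
      congr 1; ring
    rw [heq]; exact hcm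
  -- -y₀ ∈ negPart
  have hy₀neg : -y₀ ∈ _root_.negPart K x := by
    obtain ⟨-, τ, hτ, hmem⟩ := hy₀pos
    refine ⟨(hfrsymm y₀).1 hy₀fr, τ, hτ, ?_⟩
    rw [show -y₀ + τ • x = -(y₀ - τ • x) by abel]
    exact (hintsymm _).1 hmem
  -- posPart and negPart are disjoint
  have hPNdisj : ∀ z : EuclideanSpace ℝ (Fin n),
      z ∈ boundaryPosPart K x → z ∈ _root_.negPart K x → False := by
    rintro z ⟨hzfr, τ, hτ, hzτ⟩ ⟨-, σ, hσ, hzσ⟩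
    have ha : (0:ℝ) < σ / (τ + σ) := by positivity
    have hb : (0:ℝ) < τ / (τ + σ) := by positivity
    have hab : σ / (τ + σ) + τ / (τ + σ) = 1 := by
      rw [← add_div, add_comm σ τ, div_self (by positivity : τ + σ ≠ 0)]
    have hcm := hconv.interior hzτ hzσ ha.le hb.le hab
    have heq : (σ / (τ + σ)) • (z - τ • x) + (τ / (τ + σ)) • (z + σ • x) = z := by
      rw [smul_sub, smul_add, smul_smul, smul_smul,
        show (σ / (τ + σ)) • z - (σ / (τ + σ) * τ) • x +
            ((τ / (τ + σ)) • z + (τ / (τ + σ) * σ) • x)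
          = ((σ / (τ + σ)) + (τ / (τ + σ))) • z
            + ((τ / (τ + σ) * σ) - (σ / (τ + σ) * τ)) • x by
          rw [add_smul, sub_smul]; abel,
        hab, one_smul, show τ / (τ + σ) * σ - σ / (τ + σ) * τ = 0 by ring, zero_smul, add_zero]
    rw [heq] at hcm
    exact ((hfr' z).1 hzfr).2 hcm
  -- partition of the frontier
  have hpart : ∀ z : EuclideanSpace ℝ (Fin n), z ∈ frontier K → z ∉ shadowBoundary K x →
      z ∈ boundaryPosPart K x ∨ z ∈ _root_.negPart K x := by
    intro z hzfr hzS
    have hzK : z ∈ K := ((hfr' z).1 hzfr).1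
    have hex : ¬ (∀ t : ℝ, z + t • x ∉ interior K) := by
      intro h
      exact hzS ⟨hzfr, ⟨0, by simpa using hzK⟩, h⟩
    push_neg at hex
    obtain ⟨t, ht⟩ := hex
    rcases lt_trichotomy t 0 with htneg | htzero | htpos
    · left
      refine ⟨hzfr, -t, by linarith, ?_⟩
      rw [show z - (-t) • x = z + t • x by rw [neg_smul]; abel]
      exact ht
    · exfalso
      rw [htzero, zero_smul, add_zero] at ht
      exact ((hfr' z).1 hzfr).2 ht
    · right
      exact ⟨hzfr, t, htpos, ht⟩
  -- Kp and Km are open in the subtype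
  set Km : Set ↥(frontier K) := {y | (y : EuclideanSpace ℝ (Fin n)) ∈ _root_.negPart K x} with hKm
  have hKpOpen : IsOpen Kp := by
    rw [isOpen_iff_mem_nhds]
    intro y hy
    rw [hKp' y] at hy
    obtain ⟨-, τ, hτ, hmem⟩ := hy
    have hcont : Continuous fun z : ↥(frontier K) =>
        (z : EuclideanSpace ℝ (Fin n)) - τ • x := continuous_subtype_val.sub continuous_const
    have hop : IsOpen ((fun z : ↥(frontier K) =>
        (z : EuclideanSpace ℝ (Fin n)) - τ • x) ⁻¹' interior K) :=
      isOpen_interior.preimage hcont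
    filter_upwards [hop.mem_nhds hmem] with z hz
    exact (hKp' z).2 ⟨z.2, τ, hτ, hz⟩
  have hKmOpen : IsOpen Km := by
    rw [isOpen_iff_mem_nhds]
    intro y hy
    obtain ⟨-, τ, hτ, hmem⟩ := hy
    have hcont : Continuous fun z : ↥(frontier K) =>
        (z : EuclideanSpace ℝ (Fin n)) + τ • x := continuous_subtype_val.add continuous_const
    have hop : IsOpen ((fun z : ↥(frontier K) =>
        (z : EuclideanSpace ℝ (Fin n)) + τ • x) ⁻¹' interior K) :=
      isOpen_interior.preimage hcont
    filter_upwards [hop.mem_nhds hmem] with z hz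
    exact ⟨z.2, τ, hτ, hz⟩
  -- Km is disjoint from closure Kp
  have hKmKp : Disjoint Km (closure Kp) := by
    have hdis : Disjoint Km Kp := by
      rw [Set.disjoint_left]
      intro z hz hz'
      rw [hKp' z] at hz'
      exact hPNdisj z hz' hz
    have hcl : closure Kp ⊆ Kmᶜ :=
      closure_minimal (Set.disjoint_right.1 hdis) hKmOpen.isClosed_compl
    rw [Set.disjoint_left]
    intro z hz hz'
    exact hcl hz' hz
  have hKpInt : Kp ⊆ interior (closure Kp) :=
    hKpOpen.subset_interior_iff.2 subset_closure
  refine ⟨isClosed_frontier, ?_, ?_, ?_, isOpen_interior, ?_, ?_, ?_⟩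
  · -- frontier (closure Kp) ⊆ S
    intro z hz
    have hzcl : z ∈ closure Kp := by
      have h1 := hz.1; rwa [closure_closure] at h1
    have hznotint : z ∉ interior (closure Kp) := hz.2
    rw [hS' z]
    by_contra hzS
    rcases hpart z z.2 hzS with hp | hn
    · exact hznotint (hKpInt ((hKp' z).2 hp))
    · exact (Set.disjoint_left.1 hKmKp hn) hzcl
  · -- set equality
    ext z
    rw [isClosed_closure.frontier_eq]
    simp only [Set.mem_diff, Set.mem_union, Set.mem_univ, true_and]
    by_cases h1 : z ∈ closure Kp <;> by_cases h2 : z ∈ interior (closure Kp) <;> simp [h1, h2]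
  · rw [show (univ : Set ↥(frontier K)) \ closure Kp = (closure Kp)ᶜ by simp [Set.diff_eq]]
    exact isClosed_closure.isOpen_compl
  · refine ⟨⟨-y₀, (hfrsymm y₀).1 hy₀fr⟩, Set.mem_univ _, fun hc => ?_⟩
    exact Set.disjoint_left.1 hKmKp (show _ ∈ Km from hy₀neg) hc
  · exact ⟨⟨y₀, hy₀fr⟩, hKpInt ((hKp' _).2 hy₀pos)⟩
  · rw [Set.disjoint_left]
    rintro z ⟨-, hz⟩ hz'
    exact hz (interior_subset hz')
end

section
/- The restriction of the orthogonal projection p_x to the shadow boundary S(K,x) is a cell-like map onto the relative boundary of p_x(K): every point-inverse is either a single point or a closed line segment (hence a contractible compactum, in particular cell-like). -/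
open Set Metric Pointwise

/-- Line characterization of the fibers of the orthogonal projection. -/
lemma proj_eq_iff {n : ℕ} (x : EuclideanSpace ℝ (Fin n)) (y : EuclideanSpace ℝ (Fin n))
    (z : ((ℝ ∙ x)ᗮ : Submodule ℝ (EuclideanSpace ℝ (Fin n)))) :
    Submodule.orthogonalProjection ((ℝ ∙ x)ᗮ) y = z ↔
      ∃ t : ℝ, y = (z : EuclideanSpace ℝ (Fin n)) + t • x := by
  have hxx : ((ℝ ∙ x)ᗮᗮ : Submodule ℝ (EuclideanSpace ℝ (Fin n))) = ℝ ∙ x :=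
    Submodule.orthogonal_orthogonal _
  constructor
  · intro h
    have h1 : y - (Submodule.orthogonalProjection ((ℝ ∙ x)ᗮ) y : EuclideanSpace ℝ (Fin n)) ∈ (ℝ ∙ x)ᗮᗮ :=
      Submodule.sub_starProjection_mem_orthogonal y
    rw [hxx, Submodule.mem_span_singleton] at h1
    obtain ⟨t, ht⟩ := h1
    exact ⟨t, by rw [h] at ht; rw [ht]; abel⟩
  · rintro ⟨t, rfl⟩
    have hx0 : Submodule.orthogonalProjection ((ℝ ∙ x)ᗮ) x = 0 :=
      Submodule.orthogonalProjectionOnto_apply_of_mem_orthogonal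
        (by rw [hxx]; exact Submodule.mem_span_singleton_self x)
    rw [map_add, map_smul, hx0, smul_zero, add_zero,
      Submodule.orthogonalProjection_mem_subspace_eq_self]

/-- A point in the interior of the projection lifts to an interior point of `K`. -/
lemma exists_interior_preimage {n : ℕ} {K : Set (EuclideanSpace ℝ (Fin n))}
    {x : EuclideanSpace ℝ (Fin n)} (hconv : Convex ℝ K) (hint : (interior K).Nonempty)
    {z : ((ℝ ∙ x)ᗮ : Submodule ℝ (EuclideanSpace ℝ (Fin n)))}
    (hz : z ∈ interior ((Submodule.orthogonalProjection ((ℝ ∙ x)ᗮ)) '' K)) :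
    ∃ w ∈ interior K, Submodule.orthogonalProjection ((ℝ ∙ x)ᗮ) w = z := by
  obtain ⟨w₀, hw₀⟩ := hint
  set π := Submodule.orthogonalProjection ((ℝ ∙ x)ᗮ) with hπ
  set p0 := π w₀ with hp0
  obtain ⟨ε, hε, hball⟩ := Metric.mem_nhds_iff.mp (mem_interior_iff_mem_nhds.mp hz)
  set δ : ℝ := ε / (2 * (‖z - p0‖ + 1)) with hδdef
  have hnorm : (0:ℝ) < ‖z - p0‖ + 1 := by positivity
  have hδ : 0 < δ := by positivity
  have hz1 : z + δ • (z - p0) ∈ π '' K := by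
    apply hball
    rw [mem_ball_iff_norm]
    have h1 : z + δ • (z - p0) - z = δ • (z - p0) := by abel
    rw [h1, norm_smul, Real.norm_of_nonneg hδ.le]
    calc δ * ‖z - p0‖ ≤ δ * (‖z - p0‖ + 1) := by nlinarith [norm_nonneg (z - p0)]
      _ = ε / 2 := by rw [hδdef]; field_simp
      _ < ε := by linarith
  obtain ⟨y₁, hy₁K, hy₁⟩ := hz1
  have h1δ : (0:ℝ) < 1 + δ := by linarith
  refine ⟨(1 + δ)⁻¹ • y₁ + (δ * (1 + δ)⁻¹) • w₀, ?_, ?_⟩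
  · exact hconv.combo_closure_interior_mem_interior (subset_closure hy₁K) hw₀
      (by positivity) (by positivity) (by field_simp)
  · rw [map_add, map_smul, map_smul, hy₁, ← hp0]
    match_scalars <;> field_simp <;> ring

theorem projection_on_shadowBoundary_cellLike {n : ℕ}
    (K : Set (EuclideanSpace ℝ (Fin n))) (x : EuclideanSpace ℝ (Fin n))
    (hK : IsCompact K) (hconv : Convex ℝ K) (hint : (interior K).Nonempty)
    (hx : ‖x‖ = 1) :
    (Submodule.orthogonalProjection ((ℝ ∙ x)ᗮ)) '' shadowBoundary K x =
        frontier ((Submodule.orthogonalProjection ((ℝ ∙ x)ᗮ)) '' K) ∧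
      ∀ z ∈ frontier ((Submodule.orthogonalProjection ((ℝ ∙ x)ᗮ)) '' K),
        (∃ p : EuclideanSpace ℝ (Fin n),
          {y ∈ shadowBoundary K x | Submodule.orthogonalProjection ((ℝ ∙ x)ᗮ) y = z} = {p}) ∨
        (∃ a b : EuclideanSpace ℝ (Fin n), a ≠ b ∧
          {y ∈ shadowBoundary K x | Submodule.orthogonalProjection ((ℝ ∙ x)ᗮ) y = z} =
            segment ℝ a b) := by
  have hx0 : x ≠ 0 := by intro h; rw [h, norm_zero] at hx; norm_num at hx
  set π := Submodule.orthogonalProjection ((ℝ ∙ x)ᗮ) with hπdef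
  have hKclosed : IsClosed K := hK.isClosed
  have hπK_compact : IsCompact (π '' K) := hK.image π.continuous
  have hπK_closed : IsClosed (π '' K) := hπK_compact.isClosed
  have hsurj : Function.Surjective π :=
    fun v => ⟨(v : EuclideanSpace ℝ (Fin n)), Submodule.orthogonalProjection_mem_subspace_eq_self v⟩
  have hopen : IsOpenMap π := π.isOpenMap hsurj
  have hπx : π x = 0 :=
    Submodule.orthogonalProjectionOnto_apply_of_mem_orthogonal
      (by rw [Submodule.orthogonal_orthogonal]; exact Submodule.mem_span_singleton_self x)
  -- any point of K over a frontier point of the projection is in the shadow boundary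
  have hmem_shadow : ∀ z ∈ frontier (π '' K), ∀ y ∈ K, π y = z → y ∈ shadowBoundary K x := by
    intro z hz y hyK hyz
    have hznotint : z ∉ interior (π '' K) := fun h => hz.2 h
    have hnotline : ∀ t : ℝ, y + t • x ∉ interior K := by
      intro t ht
      apply hznotint
      have hπy : π (y + t • x) = z := by rw [map_add, map_smul, hyz, hπx, smul_zero, add_zero]
      exact hopen.image_interior_subset K ⟨y + t • x, ht, hπy⟩
    refine ⟨?_, ⟨0, by simpa using hyK⟩, hnotline⟩
    rw [hKclosed.frontier_eq]
    exact ⟨hyK, by simpa using hnotline 0⟩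
  have himg : π '' shadowBoundary K x = frontier (π '' K) := by
    apply Subset.antisymm
    · rintro _ ⟨y, ⟨hyfr, _, hyline⟩, rfl⟩
      rw [hπK_closed.frontier_eq]
      refine ⟨⟨y, hKclosed.frontier_subset hyfr, rfl⟩, fun h => ?_⟩
      obtain ⟨w, hwint, hwz⟩ := exists_interior_preimage hconv hint h
      obtain ⟨s, hs⟩ := (proj_eq_iff x w (π y)).mp hwz
      obtain ⟨s', hs'⟩ := (proj_eq_iff x y (π y)).mp rfl
      refine hyline (s - s') ?_
      have hw : y + (s - s') • x = w := by
        rw [hs, sub_smul]; nth_rewrite 1 [hs']; abel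
      rwa [hw]
    · intro z hz
      obtain ⟨y, hyK, hyz⟩ := hπK_closed.frontier_subset hz
      exact ⟨y, hmem_shadow z hz y hyK hyz, hyz⟩
  refine ⟨himg, fun z hz => ?_⟩
  -- the fiber is exactly K intersected with the line over z
  have hfib : {y ∈ shadowBoundary K x | π y = z} =
      (fun t : ℝ => (z : EuclideanSpace ℝ (Fin n)) + t • x) '' {t : ℝ | (z : EuclideanSpace ℝ (Fin n)) + t • x ∈ K} := by
    ext y
    simp only [mem_image, mem_setOf_eq, mem_sep_iff]
    constructor
    · rintro ⟨hysh, hyz⟩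
      obtain ⟨t, rfl⟩ := (proj_eq_iff x y z).mp hyz
      exact ⟨t, hKclosed.frontier_subset hysh.1, rfl⟩
    · rintro ⟨t, htK, rfl⟩
      exact ⟨hmem_shadow z hz _ htK ((proj_eq_iff x _ z).mpr ⟨t, rfl⟩),
        (proj_eq_iff x _ z).mpr ⟨t, rfl⟩⟩
  set T : Set ℝ := {t : ℝ | (z : EuclideanSpace ℝ (Fin n)) + t • x ∈ K} with hTdef
  have hTconvex : Convex ℝ T := by
    intro t₁ h₁ t₂ h₂ u v hu hv huv
    have hmem := hconv h₁ h₂ hu hv huv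
    have he : (z : EuclideanSpace ℝ (Fin n)) + (u • t₁ + v • t₂) • x =
        u • ((z : EuclideanSpace ℝ (Fin n)) + t₁ • x) +
          v • ((z : EuclideanSpace ℝ (Fin n)) + t₂ • x) := by
      match_scalars
      · simp; linarith
      · simp
    show (z : EuclideanSpace ℝ (Fin n)) + (u • t₁ + v • t₂) • x ∈ K
    rw [he]; exact hmem
  have hTclosed : IsClosed T := by
    have : Continuous fun t : ℝ => (z : EuclideanSpace ℝ (Fin n)) + t • x := by fun_prop
    exact hKclosed.preimage this
  obtain ⟨C, hC⟩ := isBounded_iff_forall_norm_le.mp hK.isBounded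
  have hTsub : T ⊆ Icc (-(C + ‖(z : EuclideanSpace ℝ (Fin n))‖)) (C + ‖(z : EuclideanSpace ℝ (Fin n))‖) := by
    intro t ht
    have h1 : ‖t • x‖ = |t| := by rw [norm_smul, hx, mul_one, Real.norm_eq_abs]
    have h2 : t • x = ((z : EuclideanSpace ℝ (Fin n)) + t • x) - (z : EuclideanSpace ℝ (Fin n)) := by abel
    have h3 : |t| ≤ C + ‖(z : EuclideanSpace ℝ (Fin n))‖ := by
      rw [← h1, h2]
      exact (norm_sub_le _ _).trans (add_le_add_left (hC _ ht) _)
    exact abs_le.mp h3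
  have hTcompact : IsCompact T :=
    isCompact_of_isClosed_isBounded hTclosed ((isBounded_Icc _ _).subset hTsub)
  have hTne : T.Nonempty := by
    obtain ⟨y, hyK, hyz⟩ := hπK_closed.frontier_subset hz
    obtain ⟨t, rfl⟩ := (proj_eq_iff x y z).mp hyz
    exact ⟨t, hyK⟩
  have hIcc : T = Icc (sInf T) (sSup T) :=
    eq_Icc_of_connected_compact ⟨hTne, hTconvex.isPreconnected⟩ hTcompact
  set a := sInf T with hadef
  set b := sSup T with hbdef
  have hab : a ≤ b := by
    obtain ⟨t, ht⟩ := hTne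
    rw [hIcc] at ht
    exact ht.1.trans ht.2
  rcases eq_or_lt_of_le hab with heq | hlt
  · left
    refine ⟨(z : EuclideanSpace ℝ (Fin n)) + a • x, ?_⟩
    rw [hfib, hIcc, ← heq, Icc_self, image_singleton]
  · right
    refine ⟨(z : EuclideanSpace ℝ (Fin n)) + a • x,
      (z : EuclideanSpace ℝ (Fin n)) + b • x, ?_, ?_⟩
    · intro h
      have h1 : a • x = b • x := by
        have := h
        rwa [add_right_inj] at this
      have h2 : (a - b) • x = 0 := by rw [sub_smul, h1, sub_self]
      rcases smul_eq_zero.mp h2 with h3 | h3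
      · exact absurd (sub_eq_zero.mp h3) (ne_of_lt hlt)
      · exact hx0 h3
    · have hfun : ⇑(AffineMap.lineMap (z : EuclideanSpace ℝ (Fin n))
          ((z : EuclideanSpace ℝ (Fin n)) + x) : ℝ →ᵃ[ℝ] EuclideanSpace ℝ (Fin n)) =
          fun t : ℝ => (z : EuclideanSpace ℝ (Fin n)) + t • x := by
        funext t
        rw [AffineMap.lineMap_apply_module]
        match_scalars <;> ring
      rw [hfib, hIcc, ← segment_eq_Icc hlt.le, ← hfun, image_segment, hfun]
end

section
/- For λ > λ₀, the general parameter sphere γ_λ(K,x) := (1/λ)(bd(λK) ∩ bd(λK + x)) equals the shadow boundary of the centrally symmetric convex body (1/λ)(λK ∩ (λK + x)) in the direction x. -/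
open Set Metric Pointwise

/-- The critical parameter `λ₀`. -/
noncomputable def lambda0 {n : ℕ} (K : Set (EuclideanSpace ℝ (Fin n)))
    (x : EuclideanSpace ℝ (Fin n)) : ℝ :=
  sSup {t : ℝ | 0 < t ∧ (t • K) ∩ (x +ᵥ t • K) = ∅}

/-- The general parameter sphere `γ_λ(K,x)`. -/
noncomputable def paramSphere {n : ℕ} (K : Set (EuclideanSpace ℝ (Fin n)))
    (x : EuclideanSpace ℝ (Fin n)) (lam : ℝ) : Set (EuclideanSpace ℝ (Fin n)) :=
  lam⁻¹ • (frontier (lam • K) ∩ frontier (x +ᵥ lam • K))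


section Helpers
variable {n : ℕ}
local notation "E" => EuclideanSpace ℝ (Fin n)


theorem frontier_vadd' (x : E) (s : Set E) : frontier (x +ᵥ s) = x +ᵥ frontier s := by
  have := (Homeomorph.addLeft x).image_frontier s
  simp only [Homeomorph.coe_addLeft] at this
  rw [← Set.image_vadd, ← Set.image_vadd]
  simp only [vadd_eq_add]
  exact this.symm

theorem interior_vadd' (x : E) (s : Set E) : interior (x +ᵥ s) = x +ᵥ interior s := by
  have := (Homeomorph.addLeft x).image_interior s
  simp only [Homeomorph.coe_addLeft] at this
  rw [← Set.image_vadd, ← Set.image_vadd]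
  simp only [vadd_eq_add]
  exact this.symm

theorem isClosed_vadd' (x : E) (s : Set E) (h : IsClosed s) : IsClosed (x +ᵥ s) := by
  have := (Homeomorph.addLeft x).isClosedMap s h
  rw [← Set.image_vadd]; simpa only [vadd_eq_add, Homeomorph.coe_addLeft] using this

theorem frontier_smul' {c : ℝ} (hc : c ≠ 0) (s : Set E) :
    frontier (c • s) = c • frontier s := by
  rw [frontier, frontier, closure_smul₀' hc, interior_smul₀ hc, smul_set_sdiff₀ hc]

theorem small_eps (Q x : E) {U : Set E} (hU : IsOpen U) (hQ : Q ∈ U) :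
    ∃ ε > 0, ∀ s : ℝ, |s| < ε → Q + s • x ∈ U := by
  obtain ⟨δ, hδ, hball⟩ := Metric.isOpen_iff.mp hU Q hQ
  refine ⟨δ / (‖x‖ + 1), by positivity, fun s hs => hball ?_⟩
  rw [Metric.mem_ball, dist_eq_norm]
  have h1 : ‖Q + s • x - Q‖ = |s| * ‖x‖ := by
    rw [add_sub_cancel_left, norm_smul, Real.norm_eq_abs]
  rw [h1]
  have hx1 : ‖x‖ < ‖x‖ + 1 := by linarith
  calc |s| * ‖x‖ ≤ |s| * (‖x‖ + 1) := by nlinarith [abs_nonneg s, norm_nonneg x]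
    _ < δ / (‖x‖ + 1) * (‖x‖ + 1) := by
        apply mul_lt_mul_of_pos_right hs; positivity
    _ = δ := by field_simp

theorem core (A : Set E) (x : E) (hA : IsClosed A) (hAc : Convex ℝ A) :
    frontier A ∩ frontier (x +ᵥ A) =
      {Q | Q ∈ frontier (A ∩ (x +ᵥ A)) ∧ (∃ t : ℝ, Q + t • x ∈ A ∩ (x +ᵥ A)) ∧
        ∀ t : ℝ, Q + t • x ∉ interior (A ∩ (x +ᵥ A))} := by
  set B := x +ᵥ A with hB
  have hBclosed : IsClosed B := isClosed_vadd' x A hA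
  have hBc : Convex ℝ B := hAc.vadd x
  have hCclosed : IsClosed (A ∩ B) := hA.inter hBclosed
  have hintC : interior (A ∩ B) = interior A ∩ interior B := interior_inter
  have hmemB : ∀ y : E, y ∈ B ↔ y - x ∈ A := by
    intro y; rw [hB, mem_vadd_set_iff_neg_vadd_mem, vadd_eq_add, neg_add_eq_sub]
  have hintB : interior B = x +ᵥ interior A := interior_vadd' x A
  have hmemintB : ∀ y : E, y ∈ interior B ↔ y - x ∈ interior A := by
    intro y
    rw [hintB, mem_vadd_set_iff_neg_vadd_mem, vadd_eq_add, neg_add_eq_sub]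
  ext Q
  simp only [mem_inter_iff, mem_setOf_eq]
  constructor
  · rintro ⟨hQA, hQB⟩
    have hQA' : Q ∈ A := hA.frontier_subset hQA
    have hQB' : Q ∈ B := hBclosed.frontier_subset hQB
    have hQAn : Q ∉ interior A := fun h => (hA.frontier_eq ▸ hQA).2 h
    have hQBn : Q ∉ interior B := fun h => (hBclosed.frontier_eq ▸ hQB).2 h
    refine ⟨?_, ⟨0, by simpa using ⟨hQA', hQB'⟩⟩, ?_⟩
    · rw [hCclosed.frontier_eq]
      exact ⟨⟨hQA', hQB'⟩, fun h => hQAn (hintC ▸ h).1⟩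
    · intro t ht
      rw [hintC] at ht
      obtain ⟨htA, htB⟩ := ht
      rcases lt_trichotomy t 0 with hneg | h0 | hpos
      · -- use Q + x ∈ B, Q + t•x ∈ interior B
        have h1 : Q + x ∈ B := by rw [hmemB]; simpa using hQA'
        have h1t : (0:ℝ) < 1 - t := by linarith
        have ha : (0:ℝ) < 1 / (1 - t) := by positivity
        have hb : (0:ℝ) ≤ -t / (1 - t) := by
          apply div_nonneg (by linarith) h1t.le
        have hab : 1 / (1 - t) + -t / (1 - t) = 1 := by
          field_simp; ring
        have key : (1 / (1 - t)) • (Q + t • x) + (-t / (1 - t)) • (Q + x) = Q := by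
          have h2 : (1 / (1 - t)) * t + (-t / (1 - t)) = 0 := by field_simp; try ring
          match_scalars <;> nlinarith [hab, h2]
        have := hBc.combo_interior_closure_mem_interior htB
          (subset_closure h1) ha hb hab
        rw [key] at this
        exact hQBn this
      · rw [h0] at htA; exact hQAn (by simpa using htA)
      · -- use Q - x ∈ A, Q + t•x ∈ interior A
        have h1 : Q - x ∈ A := (hmemB Q).mp hQB'
        have ha : (0:ℝ) < 1 / (1 + t) := by positivity
        have hb : (0:ℝ) ≤ t / (1 + t) := by positivity
        have hab : 1 / (1 + t) + t / (1 + t) = 1 := by field_simp; try ring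
        have key : (1 / (1 + t)) • (Q + t • x) + (t / (1 + t)) • (Q - x) = Q := by
          have h2 : (1 / (1 + t)) * t - t / (1 + t) = 0 := by field_simp; try ring
          match_scalars <;> nlinarith [hab, h2]
        have := hAc.combo_interior_closure_mem_interior htA
          (subset_closure h1) ha hb hab
        rw [key] at this
        exact hQAn this
  · rintro ⟨hQfr, -, hQall⟩
    have hQC : Q ∈ A ∩ B := hCclosed.frontier_subset hQfr
    have hQnint : Q ∉ interior (A ∩ B) := fun h => (hCclosed.frontier_eq ▸ hQfr).2 h
    have hQAn : Q ∉ interior A := by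
      intro hQA
      have hQBn : Q ∉ interior B := fun h => hQnint (hintC ▸ ⟨hQA, h⟩)
      have h1 : Q - x ∈ A := (hmemB Q).mp hQC.2
      obtain ⟨ε, hε, hball⟩ := small_eps Q x isOpen_interior hQA
      set s : ℝ := min ε 1 / 2 with hs
      have hs0 : 0 < s := by positivity
      have hsε : |s| < ε := by
        rw [abs_of_pos hs0]
        have := min_le_left ε 1
        simp only [hs]; linarith
      have hs1 : s ≤ 1 := by
        have := min_le_right ε 1
        simp only [hs]; linarith
      have hsB : Q + s • x ∈ interior B := by
        rw [hmemintB]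
        have key : s • Q + (1 - s) • (Q - x) = Q + s • x - x := by module
        have := hAc.combo_interior_closure_mem_interior (a := s) (b := 1 - s) hQA
          (subset_closure h1) hs0 (by linarith) (by ring)
        rw [key] at this; exact this
      exact hQall s (hintC ▸ ⟨hball s hsε, hsB⟩)
    have hQBn : Q ∉ interior B := by
      intro hQB
      have h1 : Q - x ∈ interior A := (hmemintB Q).mp hQB
      obtain ⟨ε, hε, hball⟩ := small_eps Q x isOpen_interior hQB
      set s : ℝ := min ε 1 / 2 with hs
      have hs0 : 0 < s := by positivity
      have hsε : |(-s)| < ε := by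
        rw [abs_neg, abs_of_pos hs0]
        have := min_le_left ε 1
        simp only [hs]; linarith
      have hs1 : s ≤ 1 := by
        have := min_le_right ε 1
        simp only [hs]; linarith
      have hsA : Q + (-s) • x ∈ interior A := by
        have key : s • (Q - x) + (1 - s) • Q = Q + (-s) • x := by module
        have := hAc.combo_interior_closure_mem_interior (a := s) (b := 1 - s) h1
          (subset_closure hQC.1) hs0 (by linarith) (by ring)
        rw [key] at this; exact this
      exact hQall (-s) (hintC ▸ ⟨hsA, hball (-s) hsε⟩)
    constructor
    · rw [hA.frontier_eq]; exact ⟨hQC.1, hQAn⟩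
    · rw [hBclosed.frontier_eq]; exact ⟨hQC.2, hQBn⟩

end Helpers

theorem paramSphere_eq_shadowBoundary_of_intersection {n : ℕ}
    (K : Set (EuclideanSpace ℝ (Fin n))) (x : EuclideanSpace ℝ (Fin n))
    (hK : IsCompact K) (hconv : Convex ℝ K) (hint : (interior K).Nonempty)
    (hsymm : ∀ y ∈ K, -y ∈ K) (hx : x ≠ 0) :
    ∀ lam : ℝ, lambda0 K x < lam →
      paramSphere K x lam =
        shadowBoundary (lam⁻¹ • ((lam • K) ∩ (x +ᵥ lam • K))) x := by
  intro lam hlam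
  have h0 : (0:ℝ) < lam :=
    lt_of_le_of_lt (Real.sSup_nonneg fun t ht => ht.1.le) hlam
  have hne : lam ≠ 0 := h0.ne'
  have hAclosed : IsClosed (lam • K) := (IsCompact.smul lam hK).isClosed
  have hAconv : Convex ℝ (lam • K) := hconv.smul lam
  have hcore := core (lam • K) x hAclosed hAconv
  set C := (lam • K) ∩ (x +ᵥ lam • K) with hC
  ext P
  simp only [paramSphere, shadowBoundary, mem_setOf_eq]
  rw [mem_inv_smul_set_iff₀ hne, hcore, mem_setOf_eq]
  have hfr : frontier (lam⁻¹ • C) = lam⁻¹ • frontier C :=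
    frontier_smul' (inv_ne_zero hne) C
  have hin : interior (lam⁻¹ • C) = lam⁻¹ • interior C :=
    interior_smul₀ (inv_ne_zero hne) C
  have hsc : ∀ (t : ℝ), lam • (P + t • x) = lam • P + (lam * t) • x := by
    intro t; rw [smul_add, smul_smul]
  constructor
  · rintro ⟨h1, ⟨t, h2⟩, h3⟩
    refine ⟨?_, ⟨t / lam, ?_⟩, ?_⟩
    · rw [hfr, mem_inv_smul_set_iff₀ hne]; exact h1
    · rw [mem_inv_smul_set_iff₀ hne, hsc]
      have ht : lam * (t / lam) = t := by field_simp
      rw [ht]; exact h2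
    · intro s hs
      rw [hin, mem_inv_smul_set_iff₀ hne, hsc] at hs
      exact h3 (lam * s) hs
  · rintro ⟨h1, ⟨t, h2⟩, h3⟩
    rw [hfr, mem_inv_smul_set_iff₀ hne] at h1
    rw [mem_inv_smul_set_iff₀ hne, hsc] at h2
    refine ⟨h1, ⟨lam * t, h2⟩, ?_⟩
    intro s hs
    apply h3 (s / lam)
    rw [hin, mem_inv_smul_set_iff₀ hne, hsc]
    have ht : lam * (s / lam) = s := by field_simp
    rw [ht]; exact hs
end

section
/- The general parameter spheres converge to the shadow boundary: γ_λ(K,x) → S(K,x) in the Hausdorff metric as λ → ∞. -/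
open Set Metric Pointwise

set_option maxHeartbeats 2000000 in
theorem paramSphere_tendsto_shadowBoundary {n : ℕ}
    (K : Set (EuclideanSpace ℝ (Fin n))) (x : EuclideanSpace ℝ (Fin n))
    (hK : IsCompact K) (hconv : Convex ℝ K) (hint : (interior K).Nonempty)
    (hsymm : ∀ y ∈ K, -y ∈ K) (hx : x ≠ 0) :
    Filter.Tendsto
      (fun lam : ℝ => Metric.hausdorffDist (paramSphere K x lam) (shadowBoundary K x))
      Filter.atTop (nhds 0) := by
  classical
  have hKclosed : IsClosed K := hK.isClosed
  have hclK : closure K = K := hKclosed.closure_eq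
  have hfrK : frontier K ⊆ K := frontier_subset_closure.trans hclK.subset
  -- `0` is an interior point
  obtain ⟨p, hp⟩ := hint
  have hpneg : -p ∈ interior K := by
    obtain ⟨U, hUK, hUopen, hpU⟩ := mem_interior.1 hp
    refine mem_interior.2 ⟨-U, ?_, hUopen.neg, Set.neg_mem_neg.2 hpU⟩
    intro y hy
    have : -y ∈ K := hUK (Set.mem_neg.1 hy)
    simpa using hsymm _ this
  have h0 : (0 : EuclideanSpace ℝ (Fin n)) ∈ interior K := by
    have hconvi : Convex ℝ (interior K) := hconv.interior
    have h := hconvi hp hpneg (by norm_num : (0:ℝ) ≤ 1/2) (by norm_num : (0:ℝ) ≤ 1/2)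
      (by norm_num)
    simpa [smul_neg] using h
  have hnhds : K ∈ nhds (0 : EuclideanSpace ℝ (Fin n)) := mem_interior_iff_mem_nhds.1 h0
  have habs : Absorbent ℝ K := absorbent_nhds_zero hnhds
  have hgint : ∀ y, y ∈ interior K ↔ gauge K y < 1 := fun y =>
    (gauge_lt_one_iff_mem_interior hconv hnhds).symm
  have hgfr : ∀ y, y ∈ frontier K ↔ gauge K y = 1 := fun y =>
    (gauge_eq_one_iff_mem_frontier hconv hnhds).symm
  have frontier_not_interior : ∀ y, y ∈ interior K → y ∉ frontier K := by
    intro y hy hfy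
    exact hfy.2 hy
  -- gauge scaling with arbitrary sign
  have hgabs : ∀ (c : ℝ) (y : EuclideanSpace ℝ (Fin n)),
      gauge K (c • y) = |c| * gauge K y := by
    intro c y
    rcases le_or_gt 0 c with h | h
    · rw [gauge_smul_of_nonneg h, smul_eq_mul, abs_of_nonneg h]
    · have h1 : c • y = -((-c) • y) := by rw [neg_smul, neg_neg]
      rw [h1, gauge_neg hsymm, gauge_smul_of_nonneg (by linarith : (0:ℝ) ≤ -c), smul_eq_mul,
        abs_of_neg h]
  -- convex combination bound for the gauge
  have hcombo : ∀ (a : ℝ) (u v : EuclideanSpace ℝ (Fin n)), 0 ≤ a → a ≤ 1 →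
      gauge K ((1-a) • u + a • v) ≤ (1-a) * gauge K u + a * gauge K v := by
    intro a u v ha ha1
    calc gauge K ((1-a) • u + a • v) ≤ gauge K ((1-a) • u) + gauge K (a • v) :=
          gauge_add_le hconv habs _ _
      _ = (1-a) * gauge K u + a * gauge K v := by
          rw [gauge_smul_of_nonneg (by linarith : (0:ℝ) ≤ 1-a),
            gauge_smul_of_nonneg ha, smul_eq_mul, smul_eq_mul]
  -- bound on K
  obtain ⟨R, hR⟩ := hK.isBounded.subset_closedBall 0
  have hnormK : ∀ y ∈ K, ‖y‖ ≤ R := by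
    intro y hy
    simpa [mem_closedBall, dist_zero_right] using hR hy
  have hR0 : 0 ≤ R := le_trans (norm_nonneg _) (hnormK 0 (interior_subset h0))
  -- the rescaled parameter spheres
  set G : ℝ → Set (EuclideanSpace ℝ (Fin n)) :=
    fun ε => {w | w ∈ frontier K ∧ w - ε • x ∈ frontier K} with hGdef
  have hparam : ∀ lam : ℝ, 0 < lam → paramSphere K x lam = G lam⁻¹ := by
    intro lam hlam
    have hlam' : lam ≠ 0 := ne_of_gt hlam
    have key : ∀ (v : EuclideanSpace ℝ (Fin n)),
        lam • v ∈ frontier (lam • K) ↔ v ∈ frontier K := by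
      intro v
      simp only [frontier, closure_smul₀, interior_smul₀ hlam', Set.mem_diff,
        Set.smul_mem_smul_set_iff₀ hlam']
    have key2 : ∀ (v : EuclideanSpace ℝ (Fin n)),
        lam • v ∈ frontier (x +ᵥ lam • K) ↔ (v - lam⁻¹ • x) ∈ frontier K := by
      intro v
      have h1 : lam • v ∈ frontier (x +ᵥ lam • K) ↔ -x + lam • v ∈ frontier (lam • K) := by
        simp only [frontier, closure_vadd, interior_vadd, Set.mem_diff,
          Set.mem_vadd_set_iff_neg_vadd_mem, vadd_eq_add]
      have h2 : -x + lam • v = lam • (v - lam⁻¹ • x) := by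
        rw [smul_sub, smul_inv_smul₀ hlam']; abel
      rw [h1, h2, key]
    ext w
    rw [paramSphere, Set.mem_smul_set_iff_inv_smul_mem₀ (inv_ne_zero hlam'), inv_inv,
      Set.mem_inter_iff, key, key2]
    rfl
  -- Case A : points of `G ε` are close to the shadow boundary
  have pointwise : ∀ z ∈ frontier K, z ∉ shadowBoundary K x →
      ∃ U : Set (EuclideanSpace ℝ (Fin n)), IsOpen U ∧ z ∈ U ∧ ∃ e : ℝ, 0 < e ∧
        ∀ w ∈ U, w ∈ frontier K → ∀ ε : ℝ, 0 < ε → ε < e → w - ε • x ∉ frontier K := by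
    intro z hzfr hznS
    have hzK : z ∈ K := hfrK hzfr
    have hexists : ∃ t : ℝ, z + t • x ∈ interior K := by
      by_contra hcon
      push_neg at hcon
      exact hznS ⟨hzfr, ⟨0, by simpa using hzK⟩, hcon⟩
    obtain ⟨t₀, ht₀⟩ := hexists
    have ht₀ne : t₀ ≠ 0 := by
      rintro rfl
      exact frontier_not_interior z (by simpa using ht₀) hzfr
    refine ⟨{w | w + t₀ • x ∈ interior K}, ?_, ht₀, ?_⟩
    · have : {w : EuclideanSpace ℝ (Fin n) | w + t₀ • x ∈ interior K}
          = (fun w => w + t₀ • x) ⁻¹' interior K := rfl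
      rw [this]
      exact isOpen_interior.preimage (continuous_id.add continuous_const)
    rcases lt_or_gt_of_ne ht₀ne with hneg | hpos
    · refine ⟨-t₀, by linarith, ?_⟩
      intro w hwU hwfr ε hε hεe
      have ht₀pos : 0 < -t₀ := by linarith
      have hseg : w - ε • x ∈ openSegment ℝ (w + t₀ • x) w := by
        refine ⟨ε / (-t₀), 1 - ε / (-t₀), by positivity, ?_, by ring, ?_⟩
        · have : ε / (-t₀) < 1 := (div_lt_one ht₀pos).2 hεe
          linarith
        · have ht0 : t₀ ≠ 0 := ht₀ne
          match_scalars
          · ring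
          · field_simp
      have hmem : w - ε • x ∈ interior K :=
        hconv.openSegment_interior_closure_subset_interior hwU
          (subset_closure (hfrK hwfr)) hseg
      exact frontier_not_interior _ hmem
    · refine ⟨1, by norm_num, ?_⟩
      intro w hwU hwfr ε hε _ hwf
      have hsum : 0 < t₀ + ε := by linarith
      have hseg : w ∈ openSegment ℝ (w + t₀ • x) (w - ε • x) := by
        refine ⟨ε / (t₀ + ε), t₀ / (t₀ + ε), by positivity, by positivity, ?_, ?_⟩
        · field_simp
          ring
        · have ht0 : t₀ + ε ≠ 0 := ne_of_gt hsum
          match_scalars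
          · field_simp
            ring
          · field_simp
            ring
      have hmem : w ∈ interior K :=
        hconv.openSegment_interior_closure_subset_interior hwU
          (subset_closure (hfrK hwf)) hseg
      exact frontier_not_interior _ hmem hwfr
  have caseA : ∀ δ : ℝ, 0 < δ → ∃ ε₀ : ℝ, 0 < ε₀ ∧ ∀ ε : ℝ, 0 < ε → ε < ε₀ →
      ∀ w ∈ G ε, ∃ z ∈ shadowBoundary K x, dist w z ≤ δ := by
    intro δ hδ
    set A : Set (EuclideanSpace ℝ (Fin n)) :=
      {z | z ∈ frontier K ∧ ∀ y ∈ shadowBoundary K x, δ ≤ dist z y} with hAdef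
    have hAclosed : IsClosed A := by
      have hAeq : A = frontier K ∩ ⋂ y ∈ shadowBoundary K x, {z | δ ≤ dist z y} := by
        ext z
        simp only [hAdef, Set.mem_setOf_eq, Set.mem_inter_iff, Set.mem_iInter]
      rw [hAeq]
      exact isClosed_frontier.inter (isClosed_biInter (fun y _ =>
        isClosed_le continuous_const (Continuous.dist continuous_id continuous_const)))
    have hAK : A ⊆ K := fun z hz => hfrK hz.1
    have hAcomp : IsCompact A := hK.of_isClosed_subset hAclosed hAK
    have hAS : ∀ z ∈ A, z ∉ shadowBoundary K x := by
      intro z hz hzS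
      have h := hz.2 z hzS
      simp only [dist_self] at h
      linarith
    choose U hUopen hUmem e he hprop using
      fun (z : A) => pointwise z.1 z.2.1 (hAS z.1 z.2)
    obtain ⟨t, ht⟩ := hAcomp.elim_nhds_subcover' (fun z hz => U ⟨z, hz⟩)
      (fun z hz => (hUopen ⟨z, hz⟩).mem_nhds (hUmem ⟨z, hz⟩))
    set T : Finset ℝ := insert (1:ℝ) (t.image (fun z => e z)) with hT
    have hTne : T.Nonempty := Finset.insert_nonempty _ _
    set ε₀ := T.min' hTne with hε₀def
    have hε₀pos : 0 < ε₀ := by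
      rw [hε₀def]
      apply (Finset.lt_min'_iff T hTne).2
      intro y hy
      rw [hT, Finset.mem_insert] at hy
      rcases hy with rfl | hy
      · norm_num
      · obtain ⟨z, _, rfl⟩ := Finset.mem_image.1 hy
        exact he z
    refine ⟨ε₀, hε₀pos, ?_⟩
    intro ε hε hεlt w hw
    obtain ⟨hwfr, hwfr2⟩ := hw
    by_contra hcon
    push_neg at hcon
    have hwA : w ∈ A := ⟨hwfr, fun y hy => le_of_lt (hcon y hy)⟩
    have := ht hwA
    simp only [Set.mem_iUnion] at this
    obtain ⟨z, hz, hwU⟩ := this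
    have hεe : ε < e z := by
      refine lt_of_lt_of_le hεlt ?_
      rw [hε₀def]
      apply Finset.min'_le
      rw [hT, Finset.mem_insert]
      exact Or.inr (Finset.mem_image.2 ⟨z, hz, rfl⟩)
    exact hprop z w hwU hwfr ε hε hεe hwfr2
  -- Case B : points of the shadow boundary are close to `G ε`
  have caseB : ∀ δ : ℝ, 0 < δ → ∃ ε₀ : ℝ, 0 < ε₀ ∧ ∀ ε : ℝ, 0 < ε → ε < ε₀ →
      ∀ z ∈ shadowBoundary K x, ∃ w ∈ G ε, dist z w ≤ δ := by
    intro δ hδ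
    set L := gauge K x with hLdef
    have hL0 : 0 ≤ L := gauge_nonneg x
    set M := 1 + L with hMdef
    have hM1 : (1:ℝ) ≤ M := by rw [hMdef]; linarith
    have hM0 : (0:ℝ) < M := by linarith
    set C := M * L * R + M * ‖x‖ + 1 with hCdef
    have hC0 : (0:ℝ) < C := by positivity
    refine ⟨min M⁻¹ (δ / C), by positivity, ?_⟩
    intro ε hε hεlt z hzS
    obtain ⟨hzfr, _hex, hzni⟩ := hzS
    set ψ : ℝ → ℝ := fun t => gauge K (z + t • x) with hψdef
    have hψ0 : ψ 0 = 1 := by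
      show gauge K (z + (0:ℝ) • x) = 1
      rw [zero_smul, add_zero]
      exact (hgfr z).1 hzfr
    have hψ1 : ∀ t, 1 ≤ ψ t := by
      intro t
      by_contra h
      push_neg at h
      exact hzni t ((hgint _).2 h)
    have hψcont : Continuous ψ :=
      (continuous_gauge hconv hnhds).comp (continuous_const.add (continuous_id.smul continuous_const))
    have hψlip : ∀ a b : ℝ, ψ a ≤ ψ b + |a - b| * L := by
      intro a b
      have h1 : z + a • x = (z + b • x) + ((a - b) • x) := by
        rw [sub_smul]; abel
      calc ψ a = gauge K ((z + b • x) + ((a - b) • x)) := by rw [← h1]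
        _ ≤ gauge K (z + b • x) + gauge K ((a - b) • x) := gauge_add_le hconv habs _ _
        _ = ψ b + |a - b| * L := by rw [hgabs]
    have hmono : ∀ s t : ℝ, 0 ≤ s → s ≤ t → ψ s ≤ ψ t := by
      intro s t hs hst
      rcases eq_or_lt_of_le (hs.trans hst) with h0t | h0t
      · have hs0 : s = 0 := le_antisymm (hst.trans h0t.symm.le) hs
        rw [hs0, ← h0t]
      · set θ := s / t with hθdef
        have htne : t ≠ 0 := ne_of_gt h0t
        have hθ0 : 0 ≤ θ := div_nonneg hs h0t.le
        have hθ1 : θ ≤ 1 := (div_le_one h0t).2 hst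
        have hzs : z + s • x = (1-θ) • (z + (0:ℝ) • x) + θ • (z + t • x) := by
          match_scalars
          · ring
          · rw [hθdef]
            field_simp
            ring
        calc ψ s = gauge K ((1-θ) • (z + (0:ℝ) • x) + θ • (z + t • x)) := by
              show gauge K (z + s • x) = _; rw [hzs]
          _ ≤ (1-θ) * ψ 0 + θ * ψ t := hcombo θ _ _ hθ0 hθ1
          _ ≤ ψ t := by rw [hψ0]; nlinarith [hψ1 t]
    have hεM : ε * M ≤ 1 := by
      have h1 : ε < M⁻¹ := lt_of_lt_of_le hεlt (min_le_left _ _)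
      have := mul_le_mul_of_nonneg_right h1.le hM0.le
      rwa [inv_mul_cancel₀ (ne_of_gt hM0)] at this
    set T := ε * M with hTdef
    have hT0 : 0 < T := by positivity
    have hψle : ∀ t, 0 ≤ t → t ≤ T → ψ t ≤ M := by
      intro t ht htT
      have htle1 : t ≤ 1 := htT.trans hεM
      calc ψ t ≤ ψ 0 + |t - 0| * L := hψlip t 0
        _ = 1 + t * L := by rw [hψ0, sub_zero, abs_of_nonneg ht]
        _ ≤ 1 + 1 * L := by nlinarith
        _ = M := by rw [one_mul, hMdef]
    set φ : ℝ → ℝ := fun t => ψ (t - ε * ψ t) - ψ t with hφdef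
    have hφcont : Continuous φ :=
      (hψcont.comp (continuous_id.sub (continuous_const.mul hψcont))).sub hψcont
    have hφ0 : 0 ≤ φ 0 := by
      show 0 ≤ ψ (0 - ε * ψ 0) - ψ 0
      rw [hψ0, mul_one, zero_sub]
      linarith [hψ1 (-ε)]
    have hφT : φ T ≤ 0 := by
      have hψT : ψ T ≤ M := hψle T hT0.le le_rfl
      have h1 : 0 ≤ T - ε * ψ T := by nlinarith
      have h2 : T - ε * ψ T ≤ T := by nlinarith [hψ1 T]
      have := hmono _ _ h1 h2
      show ψ (T - ε * ψ T) - ψ T ≤ 0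
      linarith
    obtain ⟨t₁, ht₁mem, ht₁⟩ : ∃ t₁ ∈ Icc (0:ℝ) T, φ t₁ = 0 := by
      have him := intermediate_value_Icc' hT0.le hφcont.continuousOn
      have h0mem : (0:ℝ) ∈ Icc (φ T) (φ 0) := ⟨hφT, hφ0⟩
      obtain ⟨t₁, ht₁, heq⟩ := him h0mem
      exact ⟨t₁, ht₁, heq⟩
    set m := ψ t₁ with hmdef
    have hm1 : 1 ≤ m := hψ1 t₁
    have hm0 : 0 < m := by linarith
    have hmM : m ≤ M := hψle t₁ ht₁mem.1 ht₁mem.2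
    have heqm : ψ (t₁ - ε * m) = m := by
      have h := ht₁
      show ψ (t₁ - ε * m) = m
      have : ψ (t₁ - ε * ψ t₁) - ψ t₁ = 0 := h
      rw [← hmdef] at this
      linarith
    set w := m⁻¹ • (z + t₁ • x) with hwdef
    have hwfr : w ∈ frontier K := by
      apply (hgfr w).2
      rw [hwdef, gauge_smul_of_nonneg (by positivity : (0:ℝ) ≤ m⁻¹), smul_eq_mul]
      show m⁻¹ * ψ t₁ = 1
      rw [← hmdef, inv_mul_cancel₀ (ne_of_gt hm0)]
    have hwfr2 : w - ε • x ∈ frontier K := by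
      have hrw : w - ε • x = m⁻¹ • (z + (t₁ - ε * m) • x) := by
        rw [hwdef]
        have hmne : m ≠ 0 := ne_of_gt hm0
        match_scalars
        · field_simp
        · field_simp
      rw [hrw]
      apply (hgfr _).2
      rw [gauge_smul_of_nonneg (by positivity : (0:ℝ) ≤ m⁻¹), smul_eq_mul]
      show m⁻¹ * ψ (t₁ - ε * m) = 1
      rw [heqm, inv_mul_cancel₀ (ne_of_gt hm0)]
    refine ⟨w, ⟨hwfr, hwfr2⟩, ?_⟩
    -- estimate `dist z w`
    have hzR : ‖z‖ ≤ R := hnormK z (hfrK hzfr)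
    have ht₁0 : 0 ≤ t₁ := ht₁mem.1
    have ht₁T : t₁ ≤ T := ht₁mem.2
    have hminv0 : 0 < m⁻¹ := by positivity
    have hminv1 : m⁻¹ ≤ 1 := by
      rw [inv_le_one_iff₀]; right; exact hm1
    have hinvm : m⁻¹ * m = 1 := inv_mul_cancel₀ (ne_of_gt hm0)
    have hmle : m - 1 ≤ t₁ * L := by
      have h := hψlip t₁ 0
      rw [hψ0, sub_zero, abs_of_nonneg ht₁0] at h
      rw [← hmdef] at h
      linarith
    have hdiff : z - w = (1 - m⁻¹) • z - (m⁻¹ * t₁) • x := by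
      rw [hwdef]; module
    have h1minv : 0 ≤ 1 - m⁻¹ := by linarith
    have hnormb : dist z w ≤ (1 - m⁻¹) * R + (m⁻¹ * t₁) * ‖x‖ := by
      rw [dist_eq_norm, hdiff]
      refine (norm_sub_le _ _).trans ?_
      rw [norm_smul, norm_smul, Real.norm_eq_abs, Real.norm_eq_abs,
        abs_of_nonneg h1minv, abs_of_nonneg (by positivity : (0:ℝ) ≤ m⁻¹ * t₁)]
      gcongr
    have hkey1 : 1 - m⁻¹ ≤ m - 1 := by nlinarith
    have hεδ : ε * C ≤ δ := by
      have h1 : ε < δ / C := lt_of_lt_of_le hεlt (min_le_right _ _)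
      have := mul_le_mul_of_nonneg_right h1.le hC0.le
      rwa [div_mul_cancel₀ _ (ne_of_gt hC0)] at this
    have hTle : T = ε * M := rfl
    calc dist z w ≤ (1 - m⁻¹) * R + (m⁻¹ * t₁) * ‖x‖ := hnormb
      _ ≤ (m - 1) * R + t₁ * ‖x‖ := by
          have hxn : 0 ≤ ‖x‖ := norm_nonneg x
          have h2 : m⁻¹ * t₁ ≤ t₁ := by nlinarith
          gcongr
      _ ≤ (t₁ * L) * R + t₁ * ‖x‖ := by gcongr
      _ ≤ (T * L) * R + T * ‖x‖ := by
          have hxn : 0 ≤ ‖x‖ := norm_nonneg x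
          gcongr
      _ = ε * (M * L * R + M * ‖x‖) := by rw [hTle]; ring
      _ ≤ ε * C := by
          rw [hCdef]
          nlinarith
      _ ≤ δ := hεδ
  -- Conclusion
  rw [Metric.tendsto_nhds]
  intro δ hδ
  obtain ⟨ε₁, hε₁, hB⟩ := caseB (δ/3) (by linarith)
  obtain ⟨ε₂, hε₂, hA⟩ := caseA (δ/3) (by linarith)
  filter_upwards [Filter.eventually_gt_atTop (max ε₁⁻¹ ε₂⁻¹),
    Filter.eventually_gt_atTop (0:ℝ)] with lam hlam hlam0
  have hinv0 : 0 < lam⁻¹ := by positivity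
  have hinv1 : lam⁻¹ < ε₁ := by
    have h1 : ε₁⁻¹ < lam := lt_of_le_of_lt (le_max_left _ _) hlam
    have := inv_strictAnti₀ (by positivity : (0:ℝ) < ε₁⁻¹) h1
    rwa [inv_inv] at this
  have hinv2 : lam⁻¹ < ε₂ := by
    have h1 : ε₂⁻¹ < lam := lt_of_le_of_lt (le_max_right _ _) hlam
    have := inv_strictAnti₀ (by positivity : (0:ℝ) < ε₂⁻¹) h1
    rwa [inv_inv] at this
  have hd : hausdorffDist (paramSphere K x lam) (shadowBoundary K x) ≤ δ/3 := by
    rw [hparam lam hlam0]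
    apply hausdorffDist_le_of_mem_dist (by linarith)
    · exact fun w hw => hA lam⁻¹ hinv0 hinv2 w hw
    · intro z hz
      obtain ⟨w, hw, hdzw⟩ := hB lam⁻¹ hinv0 hinv1 z hz
      exact ⟨w, hw, hdzw⟩
  rw [Real.dist_eq, sub_zero, abs_of_nonneg hausdorffDist_nonneg]
  linarith
end

section
/- The bisector H_x := {y ∈ ℝⁿ : ‖y‖_K = ‖y - x‖_K}, where ‖·‖_K is the Minkowski norm with unit ball K, equals the union over λ ≥ λ₀ of the sets λ·γ_λ(K,x), and this union is disjoint. -/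
open Set Metric Pointwise

/-- The Minkowski norm (gauge) with unit ball `K`. -/
noncomputable def minkNorm {n : ℕ} (K : Set (EuclideanSpace ℝ (Fin n)))
    (y : EuclideanSpace ℝ (Fin n)) : ℝ :=
  sInf {t : ℝ | 0 < t ∧ y ∈ t • K}

/-- The bisector of `0` and `x` for the Minkowski norm with unit ball `K`. -/
noncomputable def bisector {n : ℕ} (K : Set (EuclideanSpace ℝ (Fin n)))
    (x : EuclideanSpace ℝ (Fin n)) : Set (EuclideanSpace ℝ (Fin n)) :=
  {y | minkNorm K y = minkNorm K (y - x)}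

theorem bisector_eq_union_paramSpheres {n : ℕ}
    (K : Set (EuclideanSpace ℝ (Fin n))) (x : EuclideanSpace ℝ (Fin n))
    (hK : IsCompact K) (hconv : Convex ℝ K) (hint : (interior K).Nonempty)
    (hsymm : ∀ y ∈ K, -y ∈ K) (hx : x ≠ 0) :
    (bisector K x = ⋃ lam ∈ Set.Ici (lambda0 K x), lam • paramSphere K x lam) ∧
      ∀ lam mu : ℝ, lambda0 K x ≤ lam → lambda0 K x ≤ mu → lam ≠ mu →
        Disjoint (lam • paramSphere K x lam) (mu • paramSphere K x mu) := by
  classical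
  have hKneg : -K = K := by
    ext y
    constructor
    · intro hy
      rw [Set.mem_neg] at hy
      simpa using hsymm _ hy
    · intro hy
      rw [Set.mem_neg]
      exact hsymm _ hy
  obtain ⟨z, hz⟩ := hint
  have hz' : -z ∈ interior K := by
    have h := (Homeomorph.neg (EuclideanSpace ℝ (Fin n))).image_interior K
    have h2 : -z ∈ (Homeomorph.neg (EuclideanSpace ℝ (Fin n))) '' interior K :=
      ⟨z, hz, rfl⟩
    rw [h] at h2
    have h3 : (Homeomorph.neg (EuclideanSpace ℝ (Fin n))) '' K = -K := by
      ext w; simp [Set.mem_neg, Homeomorph.neg]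
    rwa [h3, hKneg] at h2
  have h0 : (0 : EuclideanSpace ℝ (Fin n)) ∈ interior K := by
    have h := hconv.interior hz hz' (by norm_num : (0:ℝ) ≤ 1/2)
      (by norm_num : (0:ℝ) ≤ 1/2) (by norm_num)
    simpa [smul_neg] using h
  have hnhds : K ∈ nhds (0 : EuclideanSpace ℝ (Fin n)) := mem_interior_iff_mem_nhds.1 h0
  have habs : Absorbent ℝ K := absorbent_nhds_zero hnhds
  have hbdd : Bornology.IsVonNBounded ℝ K := (NormedSpace.isVonNBounded_iff _).2 hK.isBounded
  have hgx : 0 < gauge K x := (gauge_pos habs hbdd).2 hx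
  have hmg : ∀ y : EuclideanSpace ℝ (Fin n), minkNorm K y = gauge K y := fun _ => rfl
  have hneg : ∀ y : EuclideanSpace ℝ (Fin n), gauge K (-y) = gauge K y := gauge_neg hsymm
  have htri : ∀ y w : EuclideanSpace ℝ (Fin n), gauge K (y + w) ≤ gauge K y + gauge K w :=
    gauge_add_le hconv habs
  have hsmul : ∀ (a : ℝ), 0 ≤ a → ∀ y : EuclideanSpace ℝ (Fin n),
      gauge K (a • y) = a * gauge K y := by
    intro a ha y
    rw [gauge_smul_of_nonneg ha, smul_eq_mul]
  -- triangle-type bound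
  have hxbound : ∀ y : EuclideanSpace ℝ (Fin n),
      gauge K x ≤ gauge K y + gauge K (y - x) := by
    intro y
    have h := htri y (x - y)
    rw [add_sub_cancel] at h
    calc gauge K x ≤ gauge K y + gauge K (x - y) := h
      _ = gauge K y + gauge K (y - x) := by rw [← hneg (y - x), neg_sub]
  -- membership in dilates
  have hmem : ∀ (t : ℝ), 0 < t → ∀ y : EuclideanSpace ℝ (Fin n),
      (y ∈ t • K ↔ gauge K y ≤ t) := by
    intro t ht y
    have h := gauge_le_one_iff_mem_closure hconv hnhds (x := t⁻¹ • y)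
    rw [hK.isClosed.closure_eq] at h
    rw [Set.mem_smul_set_iff_inv_smul_mem₀ (ne_of_gt ht), ← h,
      gauge_smul_of_nonneg (inv_nonneg.2 ht.le), smul_eq_mul, inv_mul_le_iff₀ ht, mul_one]
  -- frontier of dilates
  have hge : ∀ (lam : ℝ), 0 < lam → ∀ y : EuclideanSpace ℝ (Fin n),
      (y ∈ frontier (lam • K) ↔ gauge K y = lam) := by
    intro lam hlam y
    have hne : lam ≠ 0 := ne_of_gt hlam
    have h1 : y ∈ frontier (lam • K) ↔ lam⁻¹ • y ∈ frontier K := by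
      simp only [frontier, Set.mem_diff, closure_smul₀, interior_smul₀ hne,
        Set.mem_smul_set_iff_inv_smul_mem₀ hne]
    rw [h1, ← gauge_eq_one_iff_mem_frontier hconv hnhds,
      gauge_smul_of_nonneg (inv_nonneg.2 hlam.le), smul_eq_mul, inv_mul_eq_one₀ hne]
    exact comm
  -- frontier of translates
  have himg : ∀ s : Set (EuclideanSpace ℝ (Fin n)), frontier (x +ᵥ s) = x +ᵥ frontier s := by
    intro s
    have h := (Homeomorph.addLeft x).image_frontier s
    simpa [← Set.image_vadd, vadd_eq_add] using h.symm
  have hvmem : ∀ (s : Set (EuclideanSpace ℝ (Fin n))) (y : EuclideanSpace ℝ (Fin n)),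
      (y ∈ x +ᵥ s ↔ y - x ∈ s) := by
    intro s y
    rw [Set.mem_vadd_set_iff_neg_vadd_mem, vadd_eq_add, neg_add_eq_sub]
  -- description of the scaled parameter spheres
  have hsphere : ∀ (lam : ℝ), 0 < lam → ∀ y : EuclideanSpace ℝ (Fin n),
      (y ∈ lam • paramSphere K x lam ↔ gauge K y = lam ∧ gauge K (y - x) = lam) := by
    intro lam hlam y
    have hne : lam ≠ 0 := ne_of_gt hlam
    unfold paramSphere
    rw [smul_smul, mul_inv_cancel₀ hne, one_smul, Set.mem_inter_iff, hge lam hlam,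
      himg, hvmem, hge lam hlam]
  -- value of lambda0
  have hhalf : 0 < gauge K x / 2 := by positivity
  have hS : {t : ℝ | 0 < t ∧ (t • K) ∩ (x +ᵥ t • K) = ∅} = Set.Ioo 0 (gauge K x / 2) := by
    ext t
    simp only [Set.mem_setOf_eq, Set.mem_Ioo]
    constructor
    · rintro ⟨ht, hempty⟩
      refine ⟨ht, ?_⟩
      by_contra hle
      push_neg at hle
      have h1 : (2:ℝ)⁻¹ • x ∈ t • K := by
        rw [hmem t ht, hsmul _ (by norm_num)]
        linarith
      have h2 : (2:ℝ)⁻¹ • x ∈ x +ᵥ t • K := by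
        rw [hvmem, hmem t ht]
        have : (2:ℝ)⁻¹ • x - x = -((2:ℝ)⁻¹ • x) := by
          rw [← neg_smul]
          have : ((2:ℝ)⁻¹ - 1) • x = (-(2:ℝ)⁻¹) • x := by norm_num
          rw [sub_smul, one_smul] at this
          exact this
        rw [this, hneg, hsmul _ (by norm_num)]
        linarith
      exact Set.eq_empty_iff_forall_notMem.1 hempty _ ⟨h1, h2⟩
    · rintro ⟨ht, hlt⟩
      refine ⟨ht, ?_⟩
      rw [Set.eq_empty_iff_forall_notMem]
      rintro y ⟨hy1, hy2⟩
      have g1 : gauge K y ≤ t := (hmem t ht y).1 hy1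
      have g2 : gauge K (y - x) ≤ t := (hmem t ht _).1 ((hvmem _ y).1 hy2)
      have := hxbound y
      linarith
  have hl0 : lambda0 K x = gauge K x / 2 := by
    unfold lambda0
    rw [hS, csSup_Ioo hhalf]
  constructor
  · ext y
    simp only [Set.mem_iUnion, Set.mem_Ici, exists_prop]
    constructor
    · intro hy
      have hy' : gauge K y = gauge K (y - x) := by
        have := hy
        simpa [bisector, hmg] using this
      have hlam0 : lambda0 K x ≤ gauge K y := by
        have h := hxbound y
        rw [← hy'] at h
        rw [hl0]
        linarith
      have hlampos : 0 < gauge K y := lt_of_lt_of_le (hl0 ▸ hhalf : 0 < lambda0 K x) hlam0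
      exact ⟨gauge K y, hlam0, (hsphere _ hlampos y).2 ⟨rfl, hy'.symm⟩⟩
    · rintro ⟨lam, hlam, hy⟩
      have hlampos : 0 < lam := lt_of_lt_of_le (hl0 ▸ hhalf : 0 < lambda0 K x) hlam
      obtain ⟨h1, h2⟩ := (hsphere lam hlampos y).1 hy
      show minkNorm K y = minkNorm K (y - x)
      rw [hmg, hmg, h1, h2]
  · intro lam mu hlam hmu hne
    rw [Set.disjoint_left]
    intro y hy1 hy2
    have hlp : 0 < lam := lt_of_lt_of_le (hl0 ▸ hhalf : 0 < lambda0 K x) hlam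
    have hmp : 0 < mu := lt_of_lt_of_le (hl0 ▸ hhalf : 0 < lambda0 K x) hmu
    have e1 := ((hsphere lam hlp y).1 hy1).1
    have e2 := ((hsphere mu hmp y).1 hy2).1
    exact hne (e1 ▸ e2 ▸ rfl)
end

section
/- There exists a centrally symmetric compact convex body K in ℝ³ and a direction x such that the shadow boundary S(K,x) is not locally connected (hence not an ANR, not a topological manifold, and not a polyhedron). -/
open Set Metric Pointwise

noncomputable section
namespace SBX

abbrev E3 := EuclideanSpace ℝ (Fin 3)

open Real

def mk3 (a b c : ℝ) : E3 := WithLp.toLp 2 ![a, b, c]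
@[simp] lemma mk3_0 (a b c : ℝ) : mk3 a b c 0 = a := rfl
@[simp] lemma mk3_1 (a b c : ℝ) : mk3 a b c 1 = b := rfl
@[simp] lemma mk3_2 (a b c : ℝ) : mk3 a b c 2 = c := rfl

def ee (n : ℕ) : ℝ := 1 / (n + 1)

def inB (a b : ℝ) : Prop :=
  (a = 1 ∧ b = 0) ∨ (a = -1 ∧ b = 0) ∨
  (∃ n : ℕ, a = Real.cos (ee n) ∧ b = Real.sin (ee n)) ∨
  (∃ n : ℕ, a = -Real.cos (ee n) ∧ b = -Real.sin (ee n))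

def C : Set E3 :=
  {z | (z 0 = 0 ∧ (z 1) ^ 2 + (z 2) ^ 2 = 1) ∨
       (|z 0| ≤ 1 ∧ (z 1) ^ 2 + (z 2) ^ 2 = 1 ∧ inB (z 1) (z 2))}

def K : Set E3 := convexHull ℝ C

def xdir : E3 := EuclideanSpace.single 0 (1 : ℝ)
@[simp] lemma xdir_0 : xdir 0 = 1 := by simp [xdir, EuclideanSpace.single_apply]
@[simp] lemma xdir_1 : xdir 1 = 0 := by simp [xdir, EuclideanSpace.single_apply]
@[simp] lemma xdir_2 : xdir 2 = 0 := by simp [xdir, EuclideanSpace.single_apply]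
lemma norm_xdir : ‖xdir‖ = 1 := by
  rw [xdir, EuclideanSpace.norm_single]; norm_num

lemma rho_one_of_memC {z : E3} (h : z ∈ C) : (z 1) ^ 2 + (z 2) ^ 2 = 1 := by
  rcases h with ⟨_, h⟩ | ⟨_, h, _⟩ <;> exact h
lemma abs_le_one_of_memC {z : E3} (h : z ∈ C) : |z 0| ≤ 1 := by
  rcases h with ⟨h, _⟩ | ⟨h, _, _⟩
  · rw [h]; norm_num
  · exact h

lemma neg_memC {z : E3} (h : z ∈ C) : -z ∈ C := by
  have h0 : (-z) 0 = -(z 0) := rfl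
  have h1 : (-z) 1 = -(z 1) := rfl
  have h2 : (-z) 2 = -(z 2) := rfl
  rcases h with ⟨hz, hr⟩ | ⟨hz, hr, hb⟩
  · exact Or.inl ⟨by rw [h0, hz, neg_zero], by rw [h1, h2]; ring_nf; linarith⟩
  · refine Or.inr ⟨by rw [h0, abs_neg]; exact hz, by rw [h1, h2]; ring_nf; linarith, ?_⟩
    rw [h1, h2]
    rcases hb with ⟨ha, hb⟩ | ⟨ha, hb⟩ | ⟨n, ha, hb⟩ | ⟨n, ha, hb⟩
    · exact Or.inr (Or.inl ⟨by rw [ha], by rw [hb, neg_zero]⟩)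
    · exact Or.inl ⟨by rw [ha]; ring, by rw [hb, neg_zero]⟩
    · exact Or.inr (Or.inr (Or.inr ⟨n, by rw [ha], by rw [hb]⟩))
    · exact Or.inr (Or.inr (Or.inl ⟨n, by rw [ha]; ring, by rw [hb]; ring⟩))


lemma ee_tendsto : Filter.Tendsto ee Filter.atTop (nhds 0) := by
  have h := tendsto_one_div_add_atTop_nhds_zero_nat (𝕜 := ℝ)
  exact h

lemma isClosed_inB : IsClosed {p : ℝ × ℝ | inB p.1 p.2} := by
  have key : {p : ℝ × ℝ | inB p.1 p.2} =
      insert ((1 : ℝ), (0 : ℝ)) (Set.range fun n => (Real.cos (ee n), Real.sin (ee n))) ∪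
      insert ((-1 : ℝ), (0 : ℝ)) (Set.range fun n => (-Real.cos (ee n), -Real.sin (ee n))) := by
    ext ⟨a, b⟩
    constructor
    · rintro (⟨ha, hb⟩ | ⟨ha, hb⟩ | ⟨n, ha, hb⟩ | ⟨n, ha, hb⟩)
      · exact Or.inl (Or.inl (by simp only [Prod.mk.injEq]; exact ⟨ha, hb⟩))
      · exact Or.inr (Or.inl (by simp only [Prod.mk.injEq]; exact ⟨ha, hb⟩))
      · exact Or.inl (Or.inr ⟨n, by simp only [Prod.mk.injEq]; exact ⟨ha.symm, hb.symm⟩⟩)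
      · exact Or.inr (Or.inr ⟨n, by simp only [Prod.mk.injEq]; exact ⟨ha.symm, hb.symm⟩⟩)
    · rintro ((h | ⟨n, h⟩) | (h | ⟨n, h⟩)) <;>
        simp only [Prod.ext_iff] at h <;>
        [exact Or.inl ⟨h.1, h.2⟩;
         exact Or.inr (Or.inr (Or.inl ⟨n, h.1.symm, h.2.symm⟩));
         exact Or.inr (Or.inl ⟨h.1, h.2⟩);
         exact Or.inr (Or.inr (Or.inr ⟨n, h.1.symm, h.2.symm⟩))]
  rw [key]
  have hc : Filter.Tendsto (fun n => Real.cos (ee n)) Filter.atTop (nhds 1) := by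
    have := (Real.continuous_cos.tendsto 0).comp ee_tendsto
    simpa [Function.comp_def] using this
  have hs : Filter.Tendsto (fun n => Real.sin (ee n)) Filter.atTop (nhds 0) := by
    have := (Real.continuous_sin.tendsto 0).comp ee_tendsto
    simpa [Function.comp_def] using this
  have h1 : Filter.Tendsto (fun n => (Real.cos (ee n), Real.sin (ee n))) Filter.atTop
      (nhds ((1 : ℝ), (0 : ℝ))) := hc.prodMk_nhds hs
  have h2 : Filter.Tendsto (fun n => (-Real.cos (ee n), -Real.sin (ee n))) Filter.atTop
      (nhds ((-1 : ℝ), (0 : ℝ))) := (hc.neg).prodMk_nhds (by simpa using hs.neg)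
  exact (h1.isCompact_insert_range.union h2.isCompact_insert_range).isClosed

lemma coord_continuous (i : Fin 3) : Continuous fun z : E3 => z i :=
  (EuclideanSpace.proj (𝕜 := ℝ) i).continuous

lemma isCompact_C : IsCompact C := by
  have hclosed : IsClosed C := by
    have h1 : IsClosed {z : E3 | z 0 = 0 ∧ (z 1) ^ 2 + (z 2) ^ 2 = 1} := by
      apply IsClosed.inter
      · exact isClosed_eq (coord_continuous 0) continuous_const
      · exact isClosed_eq (((coord_continuous 1).pow 2).add ((coord_continuous 2).pow 2))
          continuous_const
    have h2 : IsClosed {z : E3 | |z 0| ≤ 1 ∧ (z 1) ^ 2 + (z 2) ^ 2 = 1 ∧ inB (z 1) (z 2)} := by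
      apply IsClosed.inter
      · exact isClosed_le ((coord_continuous 0).abs) continuous_const
      apply IsClosed.inter
      · exact isClosed_eq (((coord_continuous 1).pow 2).add ((coord_continuous 2).pow 2))
          continuous_const
      · exact isClosed_inB.preimage ((coord_continuous 1).prodMk (coord_continuous 2))
    exact h1.union h2
  have hbdd : Bornology.IsBounded C := by
    apply (isBounded_closedBall (x := (0 : E3)) (r := 2)).subset
    intro z hz
    have hr : (z 1) ^ 2 + (z 2) ^ 2 = 1 := by rcases hz with ⟨_, h⟩ | ⟨_, h, _⟩ <;> exact h
    have h0 : |z 0| ≤ 1 := by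
      rcases hz with ⟨h, _⟩ | ⟨h, _, _⟩
      · rw [h]; norm_num
      · exact h
    simp only [mem_closedBall, dist_zero_right]
    rw [EuclideanSpace.norm_eq]
    have : ∑ i : Fin 3, ‖z i‖ ^ 2 = (z 0) ^ 2 + ((z 1) ^ 2 + (z 2) ^ 2) := by
      simp [Fin.sum_univ_three, Real.norm_eq_abs, sq_abs]; ring
    rw [this, hr]
    have h0' : (z 0) ^ 2 ≤ 1 := by nlinarith [abs_nonneg (z 0), sq_abs (z 0)]
    calc √((z 0) ^ 2 + 1) ≤ √4 := by
          apply Real.sqrt_le_sqrt; linarith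
      _ = 2 := by rw [show (4:ℝ) = 2^2 by norm_num, Real.sqrt_sq]; norm_num
  exact Metric.isCompact_of_isClosed_isBounded hclosed hbdd


lemma isCompact_convexHull_of_isCompact {s : Set E3} (hs : IsCompact s) (hne : s.Nonempty) :
    IsCompact (convexHull ℝ s) := by
  obtain ⟨s₀, hs₀⟩ := hne
  classical
  have hD : IsCompact (stdSimplex ℝ (Fin 4) ×ˢ Set.univ.pi fun _ : Fin 4 => s) :=
    (isCompact_stdSimplex (𝕜 := ℝ) (ι := Fin 4)).prod (isCompact_univ_pi fun _ => hs)
  have hf : Continuous fun p : (Fin 4 → ℝ) × (Fin 4 → E3) => ∑ i, p.1 i • p.2 i := by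
    apply continuous_finset_sum
    intro i _
    exact ((continuous_apply i).comp continuous_fst).smul
      ((continuous_apply i).comp continuous_snd)
  have himg : (fun p : (Fin 4 → ℝ) × (Fin 4 → E3) => ∑ i, p.1 i • p.2 i) ''
      (stdSimplex ℝ (Fin 4) ×ˢ Set.univ.pi fun _ : Fin 4 => s) = convexHull ℝ s := by
    apply Subset.antisymm
    · rintro _ ⟨⟨w, z⟩, ⟨hw, hz⟩, rfl⟩
      exact mem_convexHull_of_exists_fintype w z hw.1 hw.2 (fun i => hz i (mem_univ i)) rfl
    · intro y hy
      obtain ⟨ι, hι, z, w, hrange, hai, hw₀, hw₁, hsum⟩ :=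
        eq_pos_convex_span_of_mem_convexHull hy
      have hcard : Fintype.card ι ≤ 4 := by
        have h1 := hai.card_le_finrank_succ
        have h2 : Module.finrank ℝ (vectorSpan ℝ (Set.range z)) ≤ 3 := by
          have := Submodule.finrank_le (vectorSpan ℝ (Set.range z))
          simpa [finrank_euclideanSpace] using this
        omega
      obtain ⟨f⟩ := Function.Embedding.nonempty_iff_card_le.2
        (show Fintype.card ι ≤ Fintype.card (Fin 4) by simpa using hcard)
      have hsum' : ∀ (g : ι → ℝ) (v : ι → E3),
          ∑ j : Fin 4, Function.extend f g 0 j • Function.extend f v (fun _ => s₀) j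
            = ∑ i : ι, g i • v i := by
        intro g v
        rw [← Finset.sum_subset (Finset.subset_univ (Finset.univ.image f))]
        · rw [Finset.sum_image (fun a _ b _ h => f.injective h)]
          congr 1; funext i
          rw [f.injective.extend_apply, f.injective.extend_apply]
        · intro j _ hj
          have hnr : ¬∃ i, f i = j := by
            rintro ⟨i, rfl⟩
            exact hj (Finset.mem_image_of_mem f (Finset.mem_univ i))
          rw [Function.extend_apply' _ _ _ hnr]
          simp
      have hsumw : ∑ j : Fin 4, Function.extend f w 0 j = ∑ i : ι, w i := by
        rw [← Finset.sum_subset (Finset.subset_univ (Finset.univ.image f))]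
        · rw [Finset.sum_image (fun a _ b _ h => f.injective h)]
          congr 1; funext i
          rw [f.injective.extend_apply]
        · intro j _ hj
          have hnr : ¬∃ i, f i = j := by
            rintro ⟨i, rfl⟩
            exact hj (Finset.mem_image_of_mem f (Finset.mem_univ i))
          rw [Function.extend_apply' _ _ _ hnr]
          rfl
      refine ⟨⟨Function.extend f w 0, Function.extend f z fun _ => s₀⟩, ⟨⟨?_, ?_⟩, ?_⟩, ?_⟩
      · intro j
        dsimp only
        rcases em (∃ i, f i = j) with ⟨i, rfl⟩ | h
        · rw [f.injective.extend_apply]; exact (hw₀ i).le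
        · rw [Function.extend_apply' _ _ _ h]; simp
      · dsimp only
        rw [hsumw, hw₁]
      · intro j _
        dsimp only
        rcases em (∃ i, f i = j) with ⟨i, rfl⟩ | h
        · rw [f.injective.extend_apply]; exact hrange ⟨i, rfl⟩
        · rw [Function.extend_apply' _ _ _ h]; exact hs₀
      · exact (hsum' w z).trans hsum
  rw [← himg]
  exact hD.image hf

def cyl : Set E3 := {z | (z 1) ^ 2 + (z 2) ^ 2 ≤ 1}

lemma convex_cyl : Convex ℝ cyl := by
  intro z hz w hw a b ha hb hab
  simp only [cyl, mem_setOf_eq] at *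
  simp only [PiLp.add_apply, PiLp.smul_apply, smul_eq_mul]
  have k1 : (a * z 1 + b * w 1) ^ 2 ≤ a * z 1 ^ 2 + b * w 1 ^ 2 := by
    have e : a * z 1 ^ 2 + b * w 1 ^ 2 - (a * z 1 + b * w 1) ^ 2 = a * b * (z 1 - w 1) ^ 2 := by
      linear_combination (-(a * z 1 ^ 2 + b * w 1 ^ 2)) * hab
    nlinarith [mul_nonneg (mul_nonneg ha hb) (sq_nonneg (z 1 - w 1))]
  have k2 : (a * z 2 + b * w 2) ^ 2 ≤ a * z 2 ^ 2 + b * w 2 ^ 2 := by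
    have e : a * z 2 ^ 2 + b * w 2 ^ 2 - (a * z 2 + b * w 2) ^ 2 = a * b * (z 2 - w 2) ^ 2 := by
      linear_combination (-(a * z 2 ^ 2 + b * w 2 ^ 2)) * hab
    nlinarith [mul_nonneg (mul_nonneg ha hb) (sq_nonneg (z 2 - w 2))]
  nlinarith [mul_nonneg ha (sub_nonneg.2 hz), mul_nonneg hb (sub_nonneg.2 hw)]

lemma K_sub_cyl : K ⊆ cyl := by
  apply convexHull_min _ convex_cyl
  intro z hz
  exact le_of_eq (rho_one_of_memC hz)

lemma rho_lt_one_of_mem_interior {z : E3} (hz : z ∈ interior K) :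
    (z 1) ^ 2 + (z 2) ^ 2 < 1 := by
  have h1 : (z 1) ^ 2 + (z 2) ^ 2 ≤ 1 := K_sub_cyl (interior_subset hz)
  rcases lt_or_eq_of_le h1 with h | h
  · exact h
  exfalso
  obtain ⟨δ, hδ, hball⟩ := Metric.isOpen_iff.mp isOpen_interior z hz
  set y : E3 := z + (δ / 2) • mk3 0 (z 1) (z 2) with hy
  have hyb : y ∈ ball z δ := by
    simp only [mem_ball, hy, dist_self_add_left]
    have hn : ‖(δ / 2) • mk3 0 (z 1) (z 2)‖ = (δ / 2) * ‖mk3 0 (z 1) (z 2)‖ := by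
      rw [norm_smul, Real.norm_eq_abs, abs_of_pos (by linarith)]
    rw [hn]
    have : ‖mk3 0 (z 1) (z 2)‖ = 1 := by
      rw [EuclideanSpace.norm_eq, Fin.sum_univ_three]
      simp only [mk3_0, mk3_1, mk3_2, Real.norm_eq_abs, sq_abs]
      rw [show (0:ℝ) ^ 2 + (z 1) ^ 2 + (z 2) ^ 2 = 1 by rw [← h]; ring]
      exact Real.sqrt_one
    rw [this, mul_one]
    linarith
  have hyK : y ∈ cyl := K_sub_cyl (interior_subset (hball hyb))
  simp only [cyl, mem_setOf_eq, hy, PiLp.add_apply, PiLp.smul_apply, smul_eq_mul,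
    mk3_1, mk3_2] at hyK
  nlinarith [hδ, mul_pos hδ hδ, h]

lemma disk_mem_K {a b : ℝ} (h : a ^ 2 + b ^ 2 ≤ 1) : mk3 0 a b ∈ K := by
  rcases eq_or_lt_of_le (by positivity : (0:ℝ) ≤ a ^ 2 + b ^ 2) with h0 | h0
  · have ha : a = 0 := by nlinarith [sq_nonneg a, sq_nonneg b]
    have hb : b = 0 := by nlinarith [sq_nonneg a, sq_nonneg b]
    have hA : mk3 0 1 0 ∈ C := Or.inl ⟨rfl, by norm_num⟩
    have hB : -(mk3 0 1 0) ∈ C := neg_memC hA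
    have := (convex_convexHull ℝ C) (subset_convexHull ℝ C hA) (subset_convexHull ℝ C hB)
      (by norm_num : (0:ℝ) ≤ 1/2) (by norm_num : (0:ℝ) ≤ 1/2) (by norm_num)
    convert this using 1
    · rfl
    apply PiLp.ext; intro j
    fin_cases j <;>
      simp [PiLp.add_apply, PiLp.smul_apply, PiLp.neg_apply, smul_eq_mul, mk3, ha, hb]
  · set r : ℝ := Real.sqrt (a ^ 2 + b ^ 2) with hr
    have hrpos : 0 < r := Real.sqrt_pos.mpr h0
    have hr2 : r ^ 2 = a ^ 2 + b ^ 2 := Real.sq_sqrt (by positivity)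
    have hrle : r ≤ 1 := by nlinarith
    have hU : mk3 0 (a / r) (b / r) ∈ C := by
      refine Or.inl ⟨rfl, ?_⟩
      simp only [mk3_1, mk3_2]
      field_simp
      linarith [hr2]
    have hU' : -(mk3 0 (a / r) (b / r)) ∈ C := neg_memC hU
    have hcomb := (convex_convexHull ℝ C) (subset_convexHull ℝ C hU)
      (subset_convexHull ℝ C hU')
      (by positivity : (0:ℝ) ≤ (1 + r) / 2)
      (by nlinarith : (0:ℝ) ≤ (1 - r) / 2) (by ring)
    convert hcomb using 1
    · rfl
    apply PiLp.ext; intro j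
    fin_cases j <;>
      simp only [PiLp.add_apply, PiLp.smul_apply, PiLp.neg_apply, smul_eq_mul, mk3,
        Matrix.cons_val_zero, Matrix.cons_val_one, Matrix.head_cons, Matrix.cons_val_two,
        Matrix.tail_cons, Fin.zero_eta, Fin.mk_one, Fin.reduceFinMk, Matrix.cons_val] <;> field_simp <;> ring

-- interior nonempty
lemma interior_K_nonempty : (interior K).Nonempty := by
  rw [K, Convex.interior_nonempty_iff_affineSpan_eq_top (convex_convexHull ℝ C)]
  show affineSpan ℝ K = ⊤
  have hA : mk3 1 1 0 ∈ C := Or.inr ⟨by norm_num, by norm_num, Or.inl ⟨rfl, rfl⟩⟩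
  have hB : mk3 0 1 0 ∈ C := Or.inl ⟨rfl, by norm_num⟩
  have hB' : mk3 0 (-1) 0 ∈ C := Or.inl ⟨rfl, by norm_num⟩
  have hC : mk3 0 0 1 ∈ C := Or.inl ⟨rfl, by norm_num⟩
  have hC' : mk3 0 0 (-1) ∈ C := Or.inl ⟨rfl, by norm_num⟩
  have hsub : C ⊆ K := subset_convexHull ℝ C
  have hKne : K.Nonempty := ⟨_, hsub hB⟩
  rw [AffineSubspace.affineSpan_eq_top_iff_vectorSpan_eq_top_of_nonempty ℝ E3 E3 hKne]
  rw [eq_top_iff]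
  intro z _
  have hd0 : mk3 1 0 0 ∈ vectorSpan ℝ K := by
    have := vsub_mem_vectorSpan ℝ (hsub hA) (hsub hB)
    have he : mk3 1 1 0 -ᵥ mk3 0 1 0 = mk3 1 0 0 := by
      ext j; fin_cases j <;> simp [mk3, PiLp.sub_apply]
    rwa [he] at this
  have hd1 : mk3 0 2 0 ∈ vectorSpan ℝ K := by
    have := vsub_mem_vectorSpan ℝ (hsub hB) (hsub hB')
    have he : mk3 0 1 0 -ᵥ mk3 0 (-1) 0 = mk3 0 2 0 := by
      ext j; fin_cases j <;> simp [mk3, PiLp.sub_apply]; norm_num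
    rwa [he] at this
  have hd2 : mk3 0 0 2 ∈ vectorSpan ℝ K := by
    have := vsub_mem_vectorSpan ℝ (hsub hC) (hsub hC')
    have he : mk3 0 0 1 -ᵥ mk3 0 0 (-1) = mk3 0 0 2 := by
      ext j; fin_cases j <;> simp [mk3, PiLp.sub_apply]; norm_num
    rwa [he] at this
  have hz : z = z 0 • mk3 1 0 0 + (z 1 / 2) • mk3 0 2 0 + (z 2 / 2) • mk3 0 0 2 := by
    ext j; fin_cases j <;>
      simp [mk3, PiLp.add_apply, PiLp.smul_apply, smul_eq_mul] <;> ring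
  rw [hz]
  exact Submodule.add_mem _ (Submodule.add_mem _ (Submodule.smul_mem _ _ hd0)
    (Submodule.smul_mem _ _ hd1)) (Submodule.smul_mem _ _ hd2)

-- the fiber lemma
lemma memC_of_memK_rho_one {z : E3} (hz : z ∈ K) (hρ : (z 1) ^ 2 + (z 2) ^ 2 = 1) :
    z ∈ C := by
  classical
  rw [K, convexHull_eq] at hz
  obtain ⟨ι, t, w, c, hw0, hw1, hc, hcm⟩ := hz
  rw [Finset.centerMass_eq_of_sum_1 _ _ hw1] at hcm
  have hcoord : ∀ j : Fin 3, z j = ∑ i ∈ t, w i * c i j := by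
    intro j
    rw [← hcm]
    rw [show (∑ i ∈ t, w i • c i) j = EuclideanSpace.proj j (∑ i ∈ t, w i • c i) from rfl]
    rw [map_sum]
    congr 1
  set a := z 1
  set b := z 2
  have hdot_le : ∀ i ∈ t, a * c i 1 + b * c i 2 ≤ 1 := by
    intro i hi
    have h1 := rho_one_of_memC (hc i hi)
    nlinarith [sq_nonneg (a - c i 1), sq_nonneg (b - c i 2)]
  have hsum_eq : ∑ i ∈ t, w i * (a * c i 1 + b * c i 2) = 1 := by
    have e1 := hcoord 1
    have e2 := hcoord 2
    calc ∑ i ∈ t, w i * (a * c i 1 + b * c i 2)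
        = a * (∑ i ∈ t, w i * c i 1) + b * (∑ i ∈ t, w i * c i 2) := by
          rw [Finset.mul_sum, Finset.mul_sum, ← Finset.sum_add_distrib]
          congr 1; funext i; ring
      _ = a * a + b * b := by rw [← e1, ← e2]
      _ = 1 := by rw [← hρ]; ring
  have hdot_eq : ∀ i ∈ t, 0 < w i → a * c i 1 + b * c i 2 = 1 := by
    by_contra hcon
    push_neg at hcon
    obtain ⟨i₀, hi₀, hwi₀, hne⟩ := hcon
    have hlt : ∑ i ∈ t, w i * (a * c i 1 + b * c i 2) < ∑ i ∈ t, w i * 1 := by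
      apply Finset.sum_lt_sum
      · intro i hi
        rcases (hw0 i hi).lt_or_eq with h | h
        · exact mul_le_mul_of_nonneg_left (hdot_le i hi) h.le
        · rw [← h]; simp
      · exact ⟨i₀, hi₀, by
          have := lt_of_le_of_ne (hdot_le i₀ hi₀) hne
          exact mul_lt_mul_of_pos_left this hwi₀⟩
    rw [hsum_eq] at hlt
    simp only [mul_one, hw1] at hlt
    exact lt_irrefl 1 hlt
  have hfib : ∀ i ∈ t, 0 < w i → c i 1 = a ∧ c i 2 = b := by
    intro i hi hwi
    have h1 := rho_one_of_memC (hc i hi)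
    have h2 := hdot_eq i hi hwi
    constructor <;> nlinarith [sq_nonneg (a - c i 1), sq_nonneg (b - c i 2)]
  by_cases hB : inB a b
  · refine Or.inr ⟨?_, hρ, hB⟩
    have h0 : z 0 = ∑ i ∈ t, w i * c i 0 := hcoord 0
    rw [h0]
    calc |∑ i ∈ t, w i * c i 0| ≤ ∑ i ∈ t, |w i * c i 0| := Finset.abs_sum_le_sum_abs _ _
      _ ≤ ∑ i ∈ t, w i := by
          apply Finset.sum_le_sum
          intro i hi
          rw [abs_mul, abs_of_nonneg (hw0 i hi)]
          calc w i * |c i 0| ≤ w i * 1 :=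
                mul_le_mul_of_nonneg_left (abs_le_one_of_memC (hc i hi)) (hw0 i hi)
            _ = w i := mul_one _
      _ = 1 := hw1
  · refine Or.inl ⟨?_, hρ⟩
    rw [hcoord 0]
    apply Finset.sum_eq_zero
    intro i hi
    rcases (hw0 i hi).lt_or_eq with h | h
    · obtain ⟨ha, hb⟩ := hfib i hi h
      rcases hc i hi with ⟨h00, _⟩ | ⟨_, _, hBB⟩
      · rw [h00, mul_zero]
      · exact absurd (by rwa [ha, hb] at hBB) hB
    · rw [← h, zero_mul]


lemma exists_interior_line {P : E3} (hρ : (P 1) ^ 2 + (P 2) ^ 2 < 1) :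
    ∃ t : ℝ, P + t • xdir ∈ interior K := by
  obtain ⟨q, hq⟩ := interior_K_nonempty
  have hqK : q ∈ K := interior_subset hq
  have hρq : (q 1) ^ 2 + (q 2) ^ 2 ≤ 1 := K_sub_cyl hqK
  obtain ⟨ε, hεpos, hεdef⟩ : ∃ ε : ℝ, 0 < ε ∧ (P 1) ^ 2 + (P 2) ^ 2 = 1 - 8 * ε :=
    ⟨(1 - ((P 1) ^ 2 + (P 2) ^ 2)) / 8, by linarith, by ring⟩
  have hD : -(1:ℝ) ≤ P 1 * q 1 + P 2 * q 2 := by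
    nlinarith [sq_nonneg (P 1 + q 1), sq_nonneg (P 2 + q 2)]
  have key : (0:ℝ) ≤ 2 * ε * (1 + ε) * (P 1 * q 1 + P 2 * q 2 + 1) :=
    mul_nonneg (by nlinarith) (by linarith)
  have e : (1 + ε) ^ 2 * ((P 1) ^ 2 + (P 2) ^ 2) = (1 + ε) ^ 2 * (1 - 8 * ε) := by
    rw [hεdef]
  have hw : ((1 + ε) * P 1 - ε * q 1) ^ 2 + ((1 + ε) * P 2 - ε * q 2) ^ 2 ≤ 1 := by
    nlinarith [e, key, mul_nonneg (sq_nonneg ε) (by linarith : (0:ℝ) ≤ 1 - ((q 1) ^ 2 + (q 2) ^ 2)),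
      mul_nonneg (mul_nonneg hεpos.le hεpos.le) hεpos.le, sq_nonneg ε, hεpos.le]
  have hW : mk3 0 ((1 + ε) * P 1 - ε * q 1) ((1 + ε) * P 2 - ε * q 2) ∈ K := disk_mem_K hw
  have hne : (1 : ℝ) + ε ≠ 0 := by positivity
  set Q : E3 := (ε / (1 + ε)) • q +
    (1 / (1 + ε)) • mk3 0 ((1 + ε) * P 1 - ε * q 1) ((1 + ε) * P 2 - ε * q 2) with hQ
  have hcomb : Q ∈ interior K := by
    apply Convex.combo_interior_self_mem_interior (convex_convexHull ℝ C) hq hW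
    · positivity
    · positivity
    · field_simp
      try ring
  refine ⟨Q 0 - P 0, ?_⟩
  have h0 : (P + (Q 0 - P 0) • xdir) 0 = Q 0 := by
    simp only [PiLp.add_apply, PiLp.smul_apply, smul_eq_mul, xdir_0]
    ring
  have h1 : (P + (Q 0 - P 0) • xdir) 1 = Q 1 := by
    simp only [PiLp.add_apply, PiLp.smul_apply, smul_eq_mul, xdir_1, hQ, mk3_1]
    field_simp
    ring
  have h2 : (P + (Q 0 - P 0) • xdir) 2 = Q 2 := by
    simp only [PiLp.add_apply, PiLp.smul_apply, smul_eq_mul, xdir_2, hQ, mk3_2]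
    field_simp
    ring
  have heq : P + (Q 0 - P 0) • xdir = Q := by
    ext j
    fin_cases j
    · exact h0
    · exact h1
    · exact h2
  rw [heq]
  exact hcomb

lemma ee_pos (n : ℕ) : 0 < ee n := by rw [ee]; positivity
lemma ee_le_one (n : ℕ) : ee n ≤ 1 := by
  rw [ee]
  rw [div_le_one (by positivity)]
  linarith [Nat.cast_nonneg (α := ℝ) n]
lemma ee_anti {m n : ℕ} (h : m ≤ n) : ee n ≤ ee m := by
  rw [ee, ee]
  apply one_div_le_one_div_of_le (by positivity)
  have : (m : ℝ) ≤ n := Nat.cast_le.mpr h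
  linarith
lemma ee_anti_strict {m n : ℕ} (h : m < n) : ee n < ee m := by
  rw [ee, ee]
  apply one_div_lt_one_div_of_lt (by positivity)
  have : (m : ℝ) < n := Nat.cast_lt.mpr h
  linarith
lemma ee_mem_Icc (n : ℕ) : ee n ∈ Icc (-(π/2)) (π/2) := by
  constructor
  · linarith [ee_pos n, Real.pi_pos]
  · linarith [ee_le_one n, Real.pi_gt_three]
lemma sin_ee_pos (n : ℕ) : 0 < Real.sin (ee n) :=
  Real.sin_pos_of_pos_of_lt_pi (ee_pos n) (by linarith [ee_le_one n, Real.pi_gt_three])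
lemma sin_ee_lt {m n : ℕ} (h : m < n) : Real.sin (ee n) < Real.sin (ee m) :=
  Real.strictMonoOn_sin (ee_mem_Icc n) (ee_mem_Icc m) (ee_anti_strict h)
lemma sin_ee_le {m n : ℕ} (h : m ≤ n) : Real.sin (ee n) ≤ Real.sin (ee m) := by
  rcases h.lt_or_eq with h | h
  · exact (sin_ee_lt h).le
  · rw [h]

lemma not_lcs_C : ¬ LocallyConnectedSpace ↥C := by
  intro hLCS
  have hp : mk3 (1/2) 1 0 ∈ C := by
    refine Or.inr ⟨by rw [mk3_0]; rw [abs_of_pos] <;> norm_num, by norm_num, Or.inl ⟨rfl, rfl⟩⟩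
  set p : ↥C := ⟨mk3 (1/2) 1 0, hp⟩ with hpdef
  set U : Set ↥C := {z | 0 < (z : E3) 0} with hU
  have hUopen : IsOpen U :=
    ((isOpen_lt continuous_const (coord_continuous 0)).preimage continuous_subtype_val)
  have hUmem : U ∈ nhds p := hUopen.mem_nhds (by show (0:ℝ) < mk3 (1/2) 1 0 0; norm_num)
  obtain ⟨V, hVnhds, hVpc, hVU⟩ :=
    locallyConnectedSpace_iff_connected_subsets.mp hLCS p U hUmem
  obtain ⟨ε, hεpos, hball⟩ := Metric.mem_nhds_iff.mp hVnhds
  obtain ⟨n, hn⟩ : ∃ n : ℕ, 2 * ee n < ε := by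
    obtain ⟨n, hn⟩ := exists_nat_gt (2 / ε)
    refine ⟨n, ?_⟩
    have h1 : (0:ℝ) < n + 1 := by positivity
    have h2 : 2 / ε < (n : ℝ) + 1 := by linarith
    have h3 : 2 < ε * ((n:ℝ) + 1) := by
      rw [div_lt_iff₀ hεpos] at h2
      linarith [h2]
    rw [ee]
    rw [mul_one_div, div_lt_iff₀ h1]
    linarith
  have hy : mk3 (1/2) (Real.cos (ee n)) (Real.sin (ee n)) ∈ C := by
    refine Or.inr ⟨by rw [mk3_0]; rw [abs_of_pos] <;> norm_num,
      by rw [mk3_1, mk3_2]; exact Real.cos_sq_add_sin_sq _, Or.inr (Or.inr (Or.inl ⟨n, rfl, rfl⟩))⟩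
  set y : ↥C := ⟨mk3 (1/2) (Real.cos (ee n)) (Real.sin (ee n)), hy⟩ with hydef
  have hdist : dist (y : E3) (p : E3) < ε := by
    rw [EuclideanSpace.dist_eq]
    have hsum : ∑ i : Fin 3, dist ((y : E3) i) ((p : E3) i) ^ 2
        = (Real.cos (ee n) - 1) ^ 2 + Real.sin (ee n) ^ 2 := by
      rw [Fin.sum_univ_three]
      simp only [hydef, hpdef, mk3_0, mk3_1, mk3_2, Real.dist_eq]
      rw [sub_self, abs_zero, sub_zero]
      rw [sq_abs, sq_abs]
      ring
    rw [hsum]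
    have hcos : 1 - Real.cos (ee n) ≤ ee n := by
      have h1 := Real.one_sub_sq_div_two_le_cos (x := ee n)
      nlinarith [ee_pos n, ee_le_one n]
    have hcos' : 0 ≤ 1 - Real.cos (ee n) := by linarith [Real.cos_le_one (ee n)]
    have hsin : Real.sin (ee n) ≤ ee n := Real.sin_le (ee_pos n).le
    have hsin' : 0 ≤ Real.sin (ee n) := (sin_ee_pos n).le
    have hb : (Real.cos (ee n) - 1) ^ 2 + Real.sin (ee n) ^ 2
        ≤ ((1 - Real.cos (ee n)) + Real.sin (ee n)) ^ 2 := by nlinarith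
    calc √((Real.cos (ee n) - 1) ^ 2 + Real.sin (ee n) ^ 2)
        ≤ √(((1 - Real.cos (ee n)) + Real.sin (ee n)) ^ 2) := Real.sqrt_le_sqrt hb
      _ = (1 - Real.cos (ee n)) + Real.sin (ee n) := Real.sqrt_sq (by linarith)
      _ ≤ 2 * ee n := by linarith
      _ < ε := hn
  have hyV : y ∈ V := hball (by rwa [mem_ball, Subtype.dist_eq])
  have hpV : p ∈ V := hball (mem_ball_self hεpos)
  set c : ℝ := (Real.sin (ee (n+1)) + Real.sin (ee n)) / 2 with hc
  have hc_pos : 0 < c := by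
    have := sin_ee_pos (n+1); have := sin_ee_pos n; rw [hc]; linarith
  have hc_lt : c < Real.sin (ee n) := by
    have := sin_ee_lt (Nat.lt_succ_self n); rw [hc]; linarith
  have hc_gt : Real.sin (ee (n+1)) < c := by
    have := sin_ee_lt (Nat.lt_succ_self n); rw [hc]; linarith
  set O₁ : Set ↥C := {z | c < (z : E3) 2} with hO₁def
  set O₂ : Set ↥C := {z | (z : E3) 2 < c} with hO₂def
  have hO₁ : IsOpen O₁ :=
    ((isOpen_lt continuous_const (coord_continuous 2)).preimage continuous_subtype_val)
  have hO₂ : IsOpen O₂ :=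
    ((isOpen_lt (coord_continuous 2) continuous_const).preimage continuous_subtype_val)
  have hcover : V ⊆ O₁ ∪ O₂ := by
    intro z hz
    have hz0 : 0 < (z : E3) 0 := hVU hz
    have hzC : (z : E3) ∈ C := z.2
    rcases hzC with ⟨h0, _⟩ | ⟨_, _, hB⟩
    · rw [h0] at hz0; exact absurd hz0 (lt_irrefl 0)
    rcases hB with ⟨_, h2⟩ | ⟨_, h2⟩ | ⟨m, _, h2⟩ | ⟨m, _, h2⟩
    · exact Or.inr (by rw [hO₂def]; show (z : E3) 2 < c; rw [h2]; exact hc_pos)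
    · exact Or.inr (by show (z : E3) 2 < c; rw [h2]; exact hc_pos)
    · rcases le_or_gt m n with hm | hm
      · left
        show c < (z : E3) 2
        rw [h2]
        exact lt_of_lt_of_le hc_lt (sin_ee_le hm)
      · right
        show (z : E3) 2 < c
        rw [h2]
        exact lt_of_le_of_lt (sin_ee_le (Nat.succ_le_of_lt hm : n + 1 ≤ m)) hc_gt
    · right
      show (z : E3) 2 < c
      rw [h2]
      linarith [sin_ee_pos m, hc_pos]
  have hyO₁ : y ∈ O₁ := by show c < (y : E3) 2; exact hc_lt
  have hpO₂ : p ∈ O₂ := by show (p : E3) 2 < c; exact hc_pos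
  obtain ⟨z, _, hz1, hz2⟩ := hVpc O₁ O₂ hO₁ hO₂ hcover ⟨y, hyV, hyO₁⟩ ⟨p, hpV, hpO₂⟩
  exact absurd (lt_trans hz1 hz2) (lt_irrefl c)


lemma isCompact_K : IsCompact K :=
  isCompact_convexHull_of_isCompact isCompact_C ⟨mk3 0 1 0, Or.inl ⟨rfl, by norm_num⟩⟩

lemma shadow_eq : shadowBoundary K xdir = C := by
  have hKcl : IsClosed K := isCompact_K.isClosed
  ext P
  constructor
  · rintro ⟨hF, -, hall⟩
    have hPK : P ∈ K := by rw [← hKcl.closure_eq]; exact frontier_subset_closure hF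
    have hρle : (P 1) ^ 2 + (P 2) ^ 2 ≤ 1 := K_sub_cyl hPK
    rcases lt_or_eq_of_le hρle with h | h
    · obtain ⟨t, ht⟩ := exists_interior_line h
      exact absurd ht (hall t)
    · exact memC_of_memK_rho_one hPK h
  · intro hP
    have hρ := rho_one_of_memC hP
    have hPK : P ∈ K := subset_convexHull ℝ C hP
    have hall : ∀ t : ℝ, P + t • xdir ∉ interior K := by
      intro t ht
      have h1 : (P + t • xdir) 1 = P 1 := by
        simp [PiLp.add_apply, PiLp.smul_apply]
      have h2 : (P + t • xdir) 2 = P 2 := by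
        simp [PiLp.add_apply, PiLp.smul_apply]
      have hlt := rho_lt_one_of_mem_interior ht
      rw [h1, h2, hρ] at hlt
      exact lt_irrefl 1 hlt
    refine ⟨?_, ⟨0, by simpa using hPK⟩, hall⟩
    rw [hKcl.frontier_eq]
    exact ⟨hPK, fun hint => (hall 0) (by simpa using hint)⟩

lemma neg_C : -C = C := by
  ext z
  simp only [Set.mem_neg]
  constructor
  · intro h
    have := neg_memC h
    rwa [neg_neg] at this
  · exact fun h => neg_memC h

lemma K_symm : ∀ y ∈ K, -y ∈ K := by
  have hKK : K = -K := by
    have h := convexHull_neg (𝕜 := ℝ) C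
    rw [neg_C] at h
    rw [K, ← h]
  intro y hy
  rw [hKK]
  exact Set.neg_mem_neg.mpr hy

end SBX
end

theorem exists_shadowBoundary_not_locallyConnected :
    ∃ (K : Set (EuclideanSpace ℝ (Fin 3))) (x : EuclideanSpace ℝ (Fin 3)),
      IsCompact K ∧ Convex ℝ K ∧ (interior K).Nonempty ∧ (∀ y ∈ K, -y ∈ K) ∧
      ‖x‖ = 1 ∧ ¬ LocallyConnectedSpace ↥(shadowBoundary K x) := by
  refine ⟨SBX.K, SBX.xdir, SBX.isCompact_K, convex_convexHull ℝ SBX.C,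
    SBX.interior_K_nonempty, SBX.K_symm, SBX.norm_xdir, ?_⟩
  rw [SBX.shadow_eq]
  exact SBX.not_lcs_C
end
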